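/- arXiv:1406.3140 — 5 statements merged into one kernel-verified Lean document; each statement's English description precedes it below -/
import Mathlib

section
/- Let 0 ≤ k ≤ m. Let p₀ be an arbitrary product distribution on {0,1}^n, let p₁, …, p_{m-k} be product distributions supported on pairwise disjoint faces of the n-cube, and let p_{m-k+1}, …, p_m be arbitrary probability distributions each supported on some edge of the n-cube. Then every convex combination p = Σ_{i=0}^{m} α_i p_i (α_i ≥ 0, Σ_i α_i = 1) belongs to RBM_{n,m}. -/
open scoped BigOperators

noncomputable section

/-- The real value of a Boolean. -/
def bval (b : Bool) : ℝ := if b then 1 else 0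

/-- `p` is a probability distribution on the finite set `X`. -/
def IsProb {X : Type*} [Fintype X] (p : X → ℝ) : Prop :=
  (∀ x, 0 ≤ p x) ∧ ∑ x, p x = 1

/-- One term of the Kullback-Leibler divergence (base-2 logarithm); terms with `a = 0` are `0`. -/
noncomputable def klTerm (a b : ℝ) : ℝ := if a = 0 then 0 else a * Real.logb 2 (a / b)

/-- Kullback-Leibler divergence with base-2 logarithm; it is `⊤ = ∞` if the support of `q`
does not contain the support of `p`. -/
noncomputable def KL {X : Type*} [Fintype X] (p q : X → ℝ) : EReal :=
  if ∀ x, p x ≠ 0 → q x ≠ 0 then ((∑ x, klTerm (p x) (q x) : ℝ) : EReal) else ⊤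

/-- The divergence from `p` to a set `M` of distributions: `inf_{q ∈ M} D(p‖q)`. -/
noncomputable def KLset {X : Type*} [Fintype X] (p : X → ℝ) (M : Set (X → ℝ)) : EReal :=
  ⨅ q ∈ M, KL p q

/-- The visible distribution `p_{W,C,B}` of an RBM with `n` visible and `m` hidden units. -/
noncomputable def rbmDist (n m : ℕ) (W : Matrix (Fin m) (Fin n) ℝ) (C : Fin m → ℝ)
    (B : Fin n → ℝ) : (Fin n → Bool) → ℝ := fun v =>
  (∑ h : Fin m → Bool,
      Real.exp ((∑ j, ∑ i, bval (h j) * W j i * bval (v i)) +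
        (∑ j, C j * bval (h j)) + (∑ i, B i * bval (v i)))) /
  (∑ v' : Fin n → Bool, ∑ h : Fin m → Bool,
      Real.exp ((∑ j, ∑ i, bval (h j) * W j i * bval (v' i)) +
        (∑ j, C j * bval (h j)) + (∑ i, B i * bval (v' i))))

/-- The RBM model `RBM_{n,m}`: the closure (in `ℝ^{{0,1}^n}`) of the set of visible
distributions representable with some choice of the parameters. -/
noncomputable def RBM (n m : ℕ) : Set ((Fin n → Bool) → ℝ) :=
  closure { p | ∃ (W : Matrix (Fin m) (Fin n) ℝ) (C : Fin m → ℝ) (B : Fin n → ℝ),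
    p = rbmDist n m W C B }

/-- `p` is a product distribution on `{0,1}^n`. -/
def IsProductDist {n : ℕ} (p : (Fin n → Bool) → ℝ) : Prop :=
  ∃ f : Fin n → Bool → ℝ, (∀ i, IsProb (f i)) ∧ ∀ v, p v = ∏ i, f i (v i)

/-- A face (cubical subset) of the `n`-cube: the coordinates outside `I` are fixed to `u`. -/
def IsFace {n : ℕ} (F : Set (Fin n → Bool)) : Prop :=
  ∃ (I : Finset (Fin n)) (u : Fin n → Bool), F = {x | ∀ i ∉ I, x i = u i}

/-- An edge of the `n`-cube: a pair of vectors differing in exactly one entry. -/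
def IsEdge {n : ℕ} (E : Set (Fin n → Bool)) : Prop :=
  ∃ (x : Fin n → Bool) (i : Fin n), E = {x, Function.update x i (!x i)}

/-!
Adding a hidden unit with weights `w` and bias `c` multiplies the unnormalised visible
distribution by `1 + exp (c + w · v)`; since `RBM_{n,m}` is closed, it may equally multiply it by
`1 + g` for any pointwise limit `g` of such exponentials. These limits include every nonnegative
product function restricted to a face of the cube.

Start from a strictly positive product distribution, which needs no hidden unit, and add the face
components one hidden unit each: by disjointness the components added before vanish on the new
face, so the ratio of the new component to the current measure is a product function on that face.
Then add the edge components, again one unit each: on an edge every nonnegative function is a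
product. An arbitrary `p₀` is a limit of strictly positive product distributions.
-/

open Filter Topology Set Function

section Normalize

variable {X : Type*} [Fintype X]

def normalizeDist (p : X → ℝ) : X → ℝ := fun x => p x / ∑ y, p y

lemma normalizeDist_smul (p : X → ℝ) {a : ℝ} (ha : a ≠ 0) :
    normalizeDist (a • p) = normalizeDist p := by
  funext x
  simp only [normalizeDist, Pi.smul_apply, smul_eq_mul, ← Finset.mul_sum]
  exact mul_div_mul_left _ _ ha

lemma normalizeDist_normalizeDist_mul {p : X → ℝ} (hp : ∑ x, p x ≠ 0) (g : X → ℝ) :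
    normalizeDist (normalizeDist p * g) = normalizeDist (p * g) := by
  have : normalizeDist p * g = (∑ x, p x)⁻¹ • (p * g) := by
    funext x
    simp only [normalizeDist, Pi.mul_apply, Pi.smul_apply, smul_eq_mul]
    ring
  rw [this, normalizeDist_smul _ (inv_ne_zero hp)]

lemma normalizeDist_eq_self {p : X → ℝ} (hp : ∑ x, p x = 1) : normalizeDist p = p := by
  funext x
  simp [normalizeDist, hp]

lemma continuousAt_normalizeDist {p : X → ℝ} (hp : ∑ x, p x ≠ 0) :
    ContinuousAt normalizeDist p :=
  continuousAt_pi.2 fun x => (continuous_apply x).continuousAt.div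
    (continuous_finsetSum _ fun y _ => continuous_apply y).continuousAt hp

end Normalize

def rbmWeight (n m : ℕ) (W : Matrix (Fin m) (Fin n) ℝ) (C : Fin m → ℝ) (B : Fin n → ℝ) :
    (Fin n → Bool) → ℝ := fun v =>
  ∑ h : Fin m → Bool,
    Real.exp ((∑ j, ∑ i, bval (h j) * W j i * bval (v i)) +
      (∑ j, C j * bval (h j)) + (∑ i, B i * bval (v i)))

def expAffine (n : ℕ) (c : ℝ) (w : Fin n → ℝ) : (Fin n → Bool) → ℝ := fun v =>
  Real.exp (c + ∑ i, w i * bval (v i))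

def expAffineClosure (n : ℕ) : Set ((Fin n → Bool) → ℝ) :=
  closure (range (uncurry (expAffine n)))

section RBM

variable {n m : ℕ}

lemma rbmDist_eq_normalizeDist (W : Matrix (Fin m) (Fin n) ℝ) (C : Fin m → ℝ) (B : Fin n → ℝ) :
    rbmDist n m W C B = normalizeDist (rbmWeight n m W C B) := rfl

lemma rbmWeight_pos (W : Matrix (Fin m) (Fin n) ℝ) (C : Fin m → ℝ) (B : Fin n → ℝ)
    (v : Fin n → Bool) : 0 < rbmWeight n m W C B v :=
  Finset.sum_pos (fun _ _ => Real.exp_pos _) Finset.univ_nonempty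

lemma rbmWeight_zero (W : Matrix (Fin 0) (Fin n) ℝ) (C : Fin 0 → ℝ) (B : Fin n → ℝ) :
    rbmWeight n 0 W C B = expAffine n 0 B := by
  funext v
  simp [rbmWeight, expAffine]

lemma rbmWeight_succ (W : Matrix (Fin m) (Fin n) ℝ) (C : Fin m → ℝ) (B : Fin n → ℝ)
    (c : ℝ) (w : Fin n → ℝ) :
    rbmWeight n (m + 1) (Matrix.of (Fin.cons w W)) (Fin.cons c C) B
      = rbmWeight n m W C B * (1 + expAffine n c w) := by
  -- as a plain function, `W` lets `Fin.cons_zero` and `Fin.cons_succ` reduce `Fin.cons w W`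
  obtain ⟨W, rfl⟩ : ∃ W' : Fin m → Fin n → ℝ, W' = W := ⟨W, rfl⟩
  funext v
  rw [rbmWeight, ← Equiv.sum_comp (Fin.consEquiv fun _ : Fin (m + 1) => Bool),
    Fintype.sum_prod_type, Fintype.sum_bool]
  simp only [Fin.consEquiv_apply, Fin.sum_univ_succ, Fin.cons_zero, Fin.cons_succ,
    Matrix.of_apply, bval, if_true, Bool.false_eq_true, if_false, zero_mul, one_mul,
    mul_one, Finset.sum_const_zero, zero_add, Pi.mul_apply, Pi.add_apply,
    Pi.one_apply, mul_add, rbmWeight, expAffine, Finset.sum_mul, ← Real.exp_add]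
  refine (add_comm _ _).trans (congrArg₂ (· + ·) ?_ ?_) <;>
    exact Finset.sum_congr rfl fun h _ => by congr 1; ring

lemma normalizeDist_rbmDist_mul_one_add_expAffine (W : Matrix (Fin m) (Fin n) ℝ)
    (C : Fin m → ℝ) (B : Fin n → ℝ) (c : ℝ) (w : Fin n → ℝ) :
    normalizeDist (rbmDist n m W C B * (1 + expAffine n c w))
      = rbmDist n (m + 1) (Matrix.of (Fin.cons w W)) (Fin.cons c C) B := by
  rw [rbmDist_eq_normalizeDist, rbmDist_eq_normalizeDist, rbmWeight_succ,
    normalizeDist_normalizeDist_mul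
      (Finset.sum_pos (fun v _ => rbmWeight_pos W C B v) Finset.univ_nonempty).ne']

end RBM

section AddHiddenUnits

variable {n m : ℕ}

lemma normalizeDist_mul_one_add_mem_RBM {p g : (Fin n → Bool) → ℝ} (hp : p ∈ RBM n m)
    (hg : g ∈ expAffineClosure n) (hsum : ∑ v, p v * (1 + g v) ≠ 0) :
    normalizeDist (p * (1 + g)) ∈ RBM n (m + 1) := by
  have hmul : Continuous fun x : ((Fin n → Bool) → ℝ) × ((Fin n → Bool) → ℝ) => x.1 * (1 + x.2) :=
    by fun_prop
  have hΦ : ContinuousAt (normalizeDist ∘ fun x : ((Fin n → Bool) → ℝ) × ((Fin n → Bool) → ℝ) =>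
      x.1 * (1 + x.2)) (p, g) :=
    ContinuousAt.comp (g := normalizeDist) (x := (p, g)) (continuousAt_normalizeDist hsum)
      hmul.continuousAt
  have hmem : (p, g) ∈ closure ({p | ∃ W C B, p = rbmDist n m W C B} ×ˢ
      range (uncurry (expAffine n))) := by
    rw [closure_prod_eq]
    exact ⟨hp, hg⟩
  refine closure_mono ?_ (hΦ.continuousWithinAt.mem_closure_image hmem)
  rintro _ ⟨⟨_, _⟩, ⟨⟨W, C, B, rfl⟩, ⟨⟨c, w⟩, rfl⟩⟩, rfl⟩
  exact ⟨_, _, _, normalizeDist_rbmDist_mul_one_add_expAffine W C B c w⟩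

lemma normalizeDist_add_mem_RBM {μ ν : (Fin n → Bool) → ℝ} (hμ : ∀ v, 0 < μ v)
    (hν : ∀ v, 0 ≤ ν v) (hμm : normalizeDist μ ∈ RBM n m) (hνμ : ν / μ ∈ expAffineClosure n) :
    normalizeDist (μ + ν) ∈ RBM n (m + 1) := by
  have hZ : 0 < ∑ v, μ v := Finset.sum_pos (fun v _ => hμ v) Finset.univ_nonempty
  have hfac : μ * (1 + ν / μ) = μ + ν := by
    funext v
    have := (hμ v).ne'
    simp only [Pi.mul_apply, Pi.add_apply, Pi.one_apply, Pi.div_apply]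
    field_simp
  have hsum : ∑ v, normalizeDist μ v * (1 + (ν / μ) v) ≠ 0 :=
    (Finset.sum_pos (fun v _ => mul_pos (div_pos (hμ v) hZ)
      (add_pos_of_pos_of_nonneg one_pos (div_nonneg (hν v) (hμ v).le))) Finset.univ_nonempty).ne'
  have h := normalizeDist_mul_one_add_mem_RBM hμm hνμ hsum
  rwa [normalizeDist_normalizeDist_mul hZ.ne', hfac] at h

lemma normalizeDist_add_sum_mem_RBM {ι : Type*} {μ : (Fin n → Bool) → ℝ}
    (comp : ι → (Fin n → Bool) → ℝ) (hμ : ∀ v, 0 < μ v) (hcomp : ∀ j v, 0 ≤ comp j v)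
    (hμm : normalizeDist μ ∈ RBM n m)
    (hadm : ∀ j s, j ∉ s → comp j / (μ + ∑ j' ∈ s, comp j') ∈ expAffineClosure n)
    (s : Finset ι) : normalizeDist (μ + ∑ j ∈ s, comp j) ∈ RBM n (m + s.card) := by
  classical
  induction s using Finset.induction_on with
  | empty => simpa using hμm
  | insert j s hj ih =>
    have hpos : ∀ v, 0 < (μ + ∑ j' ∈ s, comp j') v := fun v => by
      simp only [Pi.add_apply, Finset.sum_apply]
      exact add_pos_of_pos_of_nonneg (hμ v) (Finset.sum_nonneg fun j' _ => hcomp j' v)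
    rw [Finset.sum_insert hj, Finset.card_insert_of_notMem hj,
      show μ + (comp j + ∑ j' ∈ s, comp j') = μ + ∑ j' ∈ s, comp j' + comp j by abel]
    exact normalizeDist_add_mem_RBM hpos (hcomp j) ih (hadm j s hj)

end AddHiddenUnits

section ExpAffine

variable {n : ℕ}

lemma exists_expAffine_eq_mul_prod {c : ℝ} {ρ : Fin n → Bool → ℝ} (hc : 0 < c)
    (hρ : ∀ i b, 0 < ρ i b) :
    ∃ c' w, expAffine n c' w = fun v => c * ∏ i, ρ i (v i) := by
  refine ⟨Real.log c + ∑ i, Real.log (ρ i false),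
    fun i => Real.log (ρ i true) - Real.log (ρ i false), funext fun v => ?_⟩
  rw [expAffine, add_assoc, Real.exp_add, Real.exp_log hc, ← Finset.sum_add_distrib,
    Real.exp_sum]
  congr 1
  refine Finset.prod_congr rfl fun i _ => ?_
  cases v i <;> simp [bval, Real.exp_log (hρ i _)]

lemma mul_prod_mem_expAffineClosure {c : ℝ} {ρ : Fin n → Bool → ℝ} (hc : 0 ≤ c)
    (hρ : ∀ i b, 0 ≤ ρ i b) : (fun v => c * ∏ i, ρ i (v i)) ∈ expAffineClosure n := by
  have hcont : Continuous fun ε : ℝ => fun v : Fin n → Bool => (c + ε) * ∏ i, (ρ i (v i) + ε) := by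
    fun_prop
  have hlim := (hcont.tendsto 0).mono_left (nhdsWithin_le_nhds (s := Ioi 0))
  simp only [add_zero] at hlim
  refine mem_closure_of_tendsto hlim ?_
  filter_upwards [self_mem_nhdsWithin] with ε hε
  obtain ⟨c', w, h⟩ := exists_expAffine_eq_mul_prod (add_pos_of_nonneg_of_pos hc hε)
    (fun i b => add_pos_of_nonneg_of_pos (hρ i b) hε)
  exact ⟨(c', w), h⟩

lemma indicator_mul_prod_mem_expAffineClosure {F : Set (Fin n → Bool)} (hF : IsFace F)
    {a : ℝ} {σ : Fin n → Bool → ℝ} (ha : 0 ≤ a) (hσ : ∀ i b, 0 ≤ σ i b) :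
    F.indicator (fun v => a * ∏ i, σ i (v i)) ∈ expAffineClosure n := by
  classical
  obtain ⟨I, u, rfl⟩ := hF
  have hσ' : ∀ i b, 0 ≤ if i ∈ I ∨ b = u i then σ i b else 0 := fun i b => by
    split_ifs
    exacts [hσ i b, le_rfl]
  convert mul_prod_mem_expAffineClosure ha hσ' using 1
  funext v
  by_cases hv : v ∈ {v : Fin n → Bool | ∀ i ∉ I, v i = u i}
  · rw [indicator_of_mem hv]
    exact congrArg (a * ·) <| Finset.prod_congr rfl fun i _ =>
      (if_pos (or_iff_not_imp_left.2 (hv i))).symm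
  · rw [indicator_of_notMem hv]
    simp only [mem_ofPred_eq, not_forall] at hv
    obtain ⟨i, hi, hvi⟩ := hv
    rw [Finset.prod_eq_zero (Finset.mem_univ i) (if_neg (by tauto)), mul_zero]

lemma edge_eq_face (x : Fin n → Bool) (i : Fin n) :
    ({x, update x i (!x i)} : Set (Fin n → Bool))
      = {v | ∀ j ∉ ({i} : Finset (Fin n)), v j = x j} := by
  ext v
  simp only [mem_insert_iff, mem_singleton_iff, mem_ofPred_eq, Finset.mem_singleton]
  constructor
  · rintro (rfl | rfl) j hj
    · rfl
    · exact update_of_ne hj _ _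
  · intro h
    have hv : v = update x i (v i) :=
      (update_eq_iff.2 ⟨rfl, fun j hj => (h j hj).symm⟩).symm
    cases Bool.eq_or_eq_not (v i) (x i) with
    | inl hxi => exact Or.inl (by rw [hv, hxi, update_eq_self])
    | inr hxi => exact Or.inr (by rw [hv, hxi])

/-- On an edge every function is a product of one-coordinate factors. -/
lemma IsEdge.indicator_mem_expAffineClosure {E : Set (Fin n → Bool)} (hE : IsEdge E)
    {h : (Fin n → Bool) → ℝ} (hh : ∀ v, 0 ≤ h v) : E.indicator h ∈ expAffineClosure n := by
  classical
  obtain ⟨x, i, rfl⟩ := hE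
  have hface := indicator_mul_prod_mem_expAffineClosure ⟨{i}, x, edge_eq_face x i⟩ zero_le_one
    (σ := fun j b => if j = i then h (update x i b) else 1)
    (fun j b => by split_ifs; exacts [hh _, zero_le_one])
  convert hface using 1
  funext v
  by_cases hv : v ∈ ({x, update x i (!x i)} : Set (Fin n → Bool))
  · have hupd : update x i (v i) = v := by
      rw [edge_eq_face] at hv
      exact update_eq_iff.2 ⟨rfl, fun j hj => (hv j (by simpa using hj)).symm⟩
    rw [indicator_of_mem hv, indicator_of_mem hv, one_mul, Fintype.prod_ite_eq', hupd]
  · rw [indicator_of_notMem hv, indicator_of_notMem hv]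

end ExpAffine

lemma normalizeDist_mul_prod_mem_RBM_zero {n : ℕ} {c : ℝ} {ρ : Fin n → Bool → ℝ} (hc : 0 < c)
    (hρ : ∀ i b, 0 < ρ i b) : normalizeDist (fun v => c * ∏ i, ρ i (v i)) ∈ RBM n 0 := by
  obtain ⟨c', w, h⟩ := exists_expAffine_eq_mul_prod hc hρ
  have hscale : expAffine n c' w = Real.exp c' • expAffine n 0 w := by
    funext v
    simp [expAffine, Real.exp_add]
  refine subset_closure ⟨0, 0, w, ?_⟩
  rw [← h, hscale, normalizeDist_smul _ (Real.exp_pos c').ne', rbmDist_eq_normalizeDist,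
    rbmWeight_zero]

lemma IsProductDist.nonneg {n : ℕ} {p : (Fin n → Bool) → ℝ} (hp : IsProductDist p)
    (v : Fin n → Bool) : 0 ≤ p v := by
  obtain ⟨f, hf, hfp⟩ := hp
  rw [hfp]
  exact Finset.prod_nonneg fun i _ => (hf i).1 _

lemma normalizeDist_add_sum_face_mem_RBM {n : ℕ} {ι : Type*} [Fintype ι] {c : ℝ}
    {ρ : Fin n → Bool → ℝ} (hc : 0 < c) (hρ : ∀ i b, 0 < ρ i b) {F : ι → Set (Fin n → Bool)}
    (hF : ∀ j, IsFace (F j)) (hFdisj : Pairwise (Disjoint on F)) {α : ι → ℝ}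
    (hα : ∀ j, 0 ≤ α j) {q : ι → (Fin n → Bool) → ℝ} (hq : ∀ j, IsProductDist (q j))
    (hqF : ∀ j v, v ∉ F j → q j v = 0) :
    normalizeDist ((fun v => c * ∏ i, ρ i (v i)) + ∑ j, α j • q j) ∈ RBM n (Fintype.card ι) := by
  choose g hg hgq using id hq
  have hμ : ∀ v : Fin n → Bool, 0 < c * ∏ i, ρ i (v i) := fun v =>
    mul_pos hc (Finset.prod_pos fun i _ => hρ i (v i))
  have hcomp : ∀ j v, 0 ≤ (α j • q j) v := fun j v =>
    mul_nonneg (hα j) ((hq j).nonneg v)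
  have h := normalizeDist_add_sum_mem_RBM _ hμ hcomp (normalizeDist_mul_prod_mem_RBM_zero hc hρ)
    (fun j s hj => ?_) Finset.univ
  · simpa using h
  -- the other components vanish on `F j`, so there the ratio is taken against the base alone
  have hratio : α j • q j / ((fun v => c * ∏ i, ρ i (v i)) + ∑ j' ∈ s, α j' • q j')
      = (F j).indicator (fun v => α j / c * ∏ i, (g j i (v i) / ρ i (v i))) := by
    funext v
    by_cases hv : v ∈ F j
    · have hzero : ∑ j' ∈ s, (α j' • q j') v = 0 := Finset.sum_eq_zero fun j' hj' => by
        rw [Pi.smul_apply, hqF j' v (disjoint_right.1 (hFdisj (ne_of_mem_of_not_mem hj' hj)) hv),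
          smul_zero]
      rw [Pi.div_apply, Pi.add_apply, Finset.sum_apply, hzero, add_zero, indicator_of_mem hv,
        Pi.smul_apply, smul_eq_mul, hgq, Finset.prod_div_distrib, mul_div_mul_comm]
    · rw [indicator_of_notMem hv, Pi.div_apply, Pi.smul_apply, hqF j v hv, smul_zero, zero_div]
  rw [hratio]
  exact indicator_mul_prod_mem_expAffineClosure (hF j) (div_nonneg (hα j) hc.le)
    fun i b => div_nonneg ((hg j i).1 b) (hρ i b).le

lemma normalizeDist_add_sum_edge_mem_RBM {n m : ℕ} {ι : Type*} [Fintype ι]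
    {μ : (Fin n → Bool) → ℝ} (hμ : ∀ v, 0 < μ v) (hμm : normalizeDist μ ∈ RBM n m)
    {E : ι → Set (Fin n → Bool)} (hE : ∀ l, IsEdge (E l)) {r : ι → (Fin n → Bool) → ℝ}
    (hr : ∀ l v, 0 ≤ r l v) (hrE : ∀ l v, v ∉ E l → r l v = 0) :
    normalizeDist (μ + ∑ l, r l) ∈ RBM n (m + Fintype.card ι) := by
  refine normalizeDist_add_sum_mem_RBM r hμ hr hμm (fun l s _ => ?_) Finset.univ
  have hD : ∀ v, 0 < (μ + ∑ l' ∈ s, r l') v := fun v => by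
    simp only [Pi.add_apply, Finset.sum_apply]
    exact add_pos_of_pos_of_nonneg (hμ v) (Finset.sum_nonneg fun l' _ => hr l' v)
  have hsupp : r l / (μ + ∑ l' ∈ s, r l') = (E l).indicator (r l / (μ + ∑ l' ∈ s, r l')) :=
    (indicator_eq_self.2 <| support_subset_iff'.2 fun v hv => by
      rw [Pi.div_apply, hrE l v hv, zero_div]).symm
  rw [hsupp]
  exact (hE l).indicator_mem_expAffineClosure fun v => div_nonneg (hr l v) (hD v).le

lemma normalizeDist_mixture_mem_RBM_of_pos {n m k : ℕ} (hk : k ≤ m) {c : ℝ}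
    {ρ : Fin n → Bool → ℝ} (hc : 0 < c) (hρ : ∀ i b, 0 < ρ i b)
    {F : Fin (m - k) → Set (Fin n → Bool)} (hF : ∀ j, IsFace (F j))
    (hFdisj : Pairwise (Disjoint on F)) {α : Fin (m - k) → ℝ} (hα : ∀ j, 0 ≤ α j)
    {q : Fin (m - k) → (Fin n → Bool) → ℝ} (hq : ∀ j, IsProductDist (q j))
    (hqF : ∀ j v, v ∉ F j → q j v = 0) {E : Fin k → Set (Fin n → Bool)}
    (hE : ∀ l, IsEdge (E l)) {r : Fin k → (Fin n → Bool) → ℝ} (hr : ∀ l v, 0 ≤ r l v)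
    (hrE : ∀ l v, v ∉ E l → r l v = 0) :
    normalizeDist ((fun v => c * ∏ i, ρ i (v i)) + ∑ j, α j • q j + ∑ l, r l) ∈ RBM n m := by
  have hpos : ∀ v, 0 < ((fun v : Fin n → Bool => c * ∏ i, ρ i (v i)) + ∑ j, α j • q j) v :=
    fun v => add_pos_of_pos_of_nonneg (mul_pos hc (Finset.prod_pos fun i _ => hρ i (v i))) <| by
      simp only [Finset.sum_apply, Pi.smul_apply, smul_eq_mul]
      exact Finset.sum_nonneg fun j _ => mul_nonneg (hα j) ((hq j).nonneg v)
  have h := normalizeDist_add_sum_edge_mem_RBM hpos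
    (normalizeDist_add_sum_face_mem_RBM hc hρ hF hFdisj hα hq hqF) hE hr hrE
  simpa [Nat.sub_add_cancel hk] using h

lemma sum_mixture_eq_one {X ι κ : Type*} [Fintype X] [Fintype ι] [Fintype κ] {p₀ : X → ℝ}
    {q : ι → X → ℝ} {r : κ → X → ℝ} (hp₀ : ∑ x, p₀ x = 1) (hq : ∀ j, ∑ x, q j x = 1)
    (hr : ∀ l, ∑ x, r l x = 1) {α₀ : ℝ} {α : ι → ℝ} {β : κ → ℝ}
    (hsum : α₀ + ∑ j, α j + ∑ l, β l = 1) :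
    ∑ x, (α₀ * p₀ x + ∑ j, α j * q j x + ∑ l, β l * r l x) = 1 := by
  simp only [Finset.sum_add_distrib, ← Finset.mul_sum]
  rw [Finset.sum_comm (t := (Finset.univ : Finset ι)),
    Finset.sum_comm (t := (Finset.univ : Finset κ))]
  simpa only [← Finset.mul_sum, hp₀, hq, hr, mul_one] using hsum

/-- For `0 ≤ k ≤ m`, any mixture of one arbitrary product distribution `p₀`,
`m-k` product distributions supported on pairwise disjoint faces of the `n`-cube, and
`k` arbitrary distributions supported on edges of the `n`-cube, belongs to `RBM_{n,m}`. -/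
theorem mixture_mem_rbm (n m k : ℕ) (hk : k ≤ m)
    (p0 : (Fin n → Bool) → ℝ) (hp0 : IsProb p0) (hp0prod : IsProductDist p0)
    (F : Fin (m - k) → Set (Fin n → Bool)) (hF : ∀ j, IsFace (F j))
    (hFdisj : ∀ j j', j ≠ j' → Disjoint (F j) (F j'))
    (q : Fin (m - k) → (Fin n → Bool) → ℝ)
    (hq : ∀ j, IsProb (q j) ∧ IsProductDist (q j) ∧ ∀ x, x ∉ F j → q j x = 0)
    (E : Fin k → Set (Fin n → Bool)) (hE : ∀ l, IsEdge (E l))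
    (r : Fin k → (Fin n → Bool) → ℝ)
    (hr : ∀ l, IsProb (r l) ∧ ∀ x, x ∉ E l → r l x = 0)
    (α0 : ℝ) (α : Fin (m - k) → ℝ) (β : Fin k → ℝ)
    (hα0 : 0 ≤ α0) (hα : ∀ j, 0 ≤ α j) (hβ : ∀ l, 0 ≤ β l)
    (hsum : α0 + ∑ j, α j + ∑ l, β l = 1) :
    (fun v => α0 * p0 v + ∑ j, α j * q j v + ∑ l, β l * r l v) ∈ RBM n m := by
  obtain ⟨f, hf, hfp⟩ := hp0prod
  let mixture : ℝ → (Fin n → Bool) → ℝ := fun ε =>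
    (fun v : Fin n → Bool => (α0 + ε) * ∏ i, (f i (v i) + ε)) + ∑ j, α j • q j +
      ∑ l, β l • r l
  have hmixture : ∀ ε > 0, normalizeDist (mixture ε) ∈ RBM n m := fun ε hε =>
    normalizeDist_mixture_mem_RBM_of_pos hk (add_pos_of_nonneg_of_pos hα0 hε)
      (fun i b => add_pos_of_nonneg_of_pos ((hf i).1 b) hε) hF (fun j j' => hFdisj j j') hα
      (fun j => (hq j).2.1) (fun j => (hq j).2.2) hE (r := fun l => β l • r l)
      (fun l v => mul_nonneg (hβ l) ((hr l).1.1 v)) (fun l v hv => by simp [(hr l).2 v hv])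
  have hmixture0 : mixture 0 = fun v => α0 * p0 v + ∑ j, α j * q j v + ∑ l, β l * r l v := by
    funext v
    simp [mixture, hfp, Finset.sum_apply]
  have htotal := sum_mixture_eq_one hp0.2 (fun j => (hq j).1.2) (fun l => (hr l).1.2) hsum
  have hcont : ContinuousAt (normalizeDist ∘ mixture) 0 :=
    ContinuousAt.comp (g := normalizeDist)
      (continuousAt_normalizeDist (by rw [hmixture0, htotal]; exact one_ne_zero)) (by fun_prop)
  have hlim := hcont.tendsto.mono_left (nhdsWithin_le_nhds (s := Ioi 0))
  rw [comp_apply, hmixture0, normalizeDist_eq_self htotal] at hlim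
  exact isClosed_closure.mem_of_tendsto hlim (eventually_nhdsWithin_of_forall hmixture)
end
end

section
/- Let ξ = {X₁, …, X_{m+1}} be a collection of m+1 pairwise disjoint cubical subsets of {0,1}^n. Then every probability distribution p on {0,1}^n that is supported on X₁ ∪ … ∪ X_{m+1} and is constant on each block X_i belongs to RBM_{n,m}. In particular, RBM_{n,m} contains the partition model of any partition of {0,1}^n into m+1 cubical blocks. -/
open scoped BigOperators

noncomputable section

/-!
Write `q i` for the value of `p` on the face `X i` and `d i v` for the number of constraints of
`X i` that `v` violates. The visible biases realise the weight `(q 0 + e^{-T}) e^{-T d 0 v}`,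
and hidden unit `j` multiplies it by `1 + exp (T (d 0 v - (n + 2) d (j+1) v) + β j)`, where
`e^{β j} = (q (j+1) + e^{-T}) / (q 0 + e^{-T})`. As `d 0 v ≤ n`, the factor of unit `j` tends
to `1` off `X (j+1)`, while on `X (j+1)` the product of the visible weight and this factor tends
to `q (j+1)`. Hence the unnormalised visible marginal tends to `p` as `T → ∞`, and since all
exponents are affine in `v`, these marginals are RBM distributions. The `e^{-T}` keeps the
logarithms finite when some `q i` vanishes.
-/

open Filter Topology Finset

lemma tendsto_div_sum {ι X : Type*} [Fintype X] {l : Filter ι} {f : ι → X → ℝ}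
    {p : X → ℝ} (hf : ∀ x, Tendsto (fun t => f t x) l (𝓝 (p x))) (hp : ∑ x, p x = 1) :
    Tendsto (fun t x => f t x / ∑ y, f t y) l (𝓝 p) := by
  refine tendsto_pi_nhds.2 fun x => ?_
  have hx := (hf x).div (tendsto_finsetSum univ fun y _ => hf y) (by simp [hp])
  rwa [hp, div_one] at hx

lemma tendsto_exp_of_le_sub {f : ℝ → ℝ} {K : ℝ} (hf : ∀ T, 0 ≤ T → f T ≤ K - T) :
    Tendsto (fun T => Real.exp (f T)) atTop (𝓝 0) :=
  Real.tendsto_exp_atBot.comp <| tendsto_atBot_mono' _ ((eventually_ge_atTop 0).mono hf)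
    (tendsto_atBot_add_const_left _ K tendsto_neg_atTop_atBot)

lemma tendsto_add_exp_neg (q : ℝ) : Tendsto (fun T => q + Real.exp (-T)) atTop (𝓝 q) := by
  simpa using tendsto_const_nhds.add (Real.tendsto_exp_atBot.comp tendsto_neg_atTop_atBot)

lemma log_add_exp_neg_le {q T : ℝ} (hq : 0 ≤ q) (hT : 0 ≤ T) :
    Real.log (q + Real.exp (-T)) ≤ Real.log (q + 1) :=
  Real.log_le_log (by positivity) (by linarith [Real.exp_le_one_iff.2 (neg_nonpos.2 hT)])

lemma neg_le_log_add_exp_neg {q : ℝ} (hq : 0 ≤ q) (T : ℝ) :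
    -T ≤ Real.log (q + Real.exp (-T)) := by
  calc -T = Real.log (Real.exp (-T)) := (Real.log_exp _).symm
    _ ≤ _ := Real.log_le_log (Real.exp_pos _) (by linarith)

section Rbm

variable {n m : ℕ}

lemma sum_hidden_exp_eq_mul_prod (W : Matrix (Fin m) (Fin n) ℝ) (C : Fin m → ℝ)
    (B : Fin n → ℝ) (v : Fin n → Bool) :
    ∑ h : Fin m → Bool, Real.exp ((∑ j, ∑ i, bval (h j) * W j i * bval (v i)) +
        (∑ j, C j * bval (h j)) + (∑ i, B i * bval (v i))) =
      Real.exp (∑ i, B i * bval (v i)) *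
        ∏ j, (1 + Real.exp (∑ i, W j i * bval (v i) + C j)) := by
  set x : Fin m → ℝ := fun j => ∑ i, W j i * bval (v i) + C j
  have hterm : ∀ h : Fin m → Bool, Real.exp ((∑ j, ∑ i, bval (h j) * W j i * bval (v i)) +
      (∑ j, C j * bval (h j)) + (∑ i, B i * bval (v i))) =
      Real.exp (∑ i, B i * bval (v i)) * ∏ j, Real.exp (bval (h j) * x j) := by
    intro h
    rw [← Real.exp_sum, ← Real.exp_add, add_comm _ (∑ i, B i * bval (v i)),
      ← sum_add_distrib]
    congr 2
    refine sum_congr rfl fun j _ => ?_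
    simp only [x, mul_add, mul_sum, mul_assoc, mul_comm (C j)]
  rw [sum_congr rfl fun h _ => hterm h, ← mul_sum,
    ← Fintype.prod_sum (fun j (b : Bool) => Real.exp (bval b * x j))]
  congr 1
  refine prod_congr rfl fun j _ => ?_
  simp [bval, x, add_comm]

def affineFunctions (n : ℕ) : Submodule ℝ ((Fin n → Bool) → ℝ) :=
  Submodule.span ℝ (insert 1 (Set.range fun i (v : Fin n → Bool) => bval (v i)))

lemma const_mem_affineFunctions (c : ℝ) : (fun _ => c) ∈ affineFunctions n := by
  have hc : (fun _ : Fin n → Bool => c) = c • (1 : (Fin n → Bool) → ℝ) := by ext; simp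
  exact hc ▸ Submodule.smul_mem _ c (Submodule.subset_span (Set.mem_insert _ _))

lemma bval_apply_mem_affineFunctions (i : Fin n) :
    (fun v : Fin n → Bool => bval (v i)) ∈ affineFunctions n :=
  Submodule.subset_span (Set.mem_insert_of_mem _ ⟨i, rfl⟩)

lemma exists_eq_of_mem_affineFunctions {f : (Fin n → Bool) → ℝ}
    (hf : f ∈ affineFunctions n) :
    ∃ (a : Fin n → ℝ) (κ : ℝ), ∀ v, f v = ∑ i, a i * bval (v i) + κ := by
  obtain ⟨κ, z, hz, rfl⟩ := Submodule.mem_span_insert.1 hf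
  obtain ⟨a, rfl⟩ := (Submodule.mem_span_range_iff_exists_fun ℝ).1 hz
  exact ⟨a, κ, fun v => by simp [Finset.sum_apply, add_comm]⟩

lemma exists_rbmDist_eq {b : (Fin n → Bool) → ℝ} {e : Fin m → (Fin n → Bool) → ℝ}
    (hb : b ∈ affineFunctions n) (he : ∀ j, e j ∈ affineFunctions n) :
    ∃ W C B, rbmDist n m W C B = fun v =>
      (Real.exp (b v) * ∏ j, (1 + Real.exp (e j v))) /
        ∑ v', Real.exp (b v') * ∏ j, (1 + Real.exp (e j v')) := by
  obtain ⟨B, κ, hb⟩ := exists_eq_of_mem_affineFunctions hb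
  choose W C he using fun j => exists_eq_of_mem_affineFunctions (he j)
  have hweight : ∀ v, Real.exp (b v) * ∏ j, (1 + Real.exp (e j v)) =
      Real.exp κ * (Real.exp (∑ i, B i * bval (v i)) *
        ∏ j, (1 + Real.exp (∑ i, W j i * bval (v i) + C j))) := by
    intro v
    simp only [hb, he, Real.exp_add]
    ring
  refine ⟨Matrix.of W, C, B, funext fun v => ?_⟩
  simp only [rbmDist, sum_hidden_exp_eq_mul_prod]
  simp only [Matrix.of_apply, hweight, ← mul_sum,
    mul_div_mul_left _ _ (Real.exp_ne_zero κ)]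

lemma mem_RBM_of_tendsto {ι : Type*} {l : Filter ι} [l.NeBot]
    {b : ι → (Fin n → Bool) → ℝ} {e : ι → Fin m → (Fin n → Bool) → ℝ}
    (hb : ∀ t, b t ∈ affineFunctions n) (he : ∀ t j, e t j ∈ affineFunctions n)
    {p : (Fin n → Bool) → ℝ} (hp : ∑ v, p v = 1)
    (hlim : ∀ v, Tendsto (fun t => Real.exp (b t v) * ∏ j, (1 + Real.exp (e t j v))) l
      (𝓝 (p v))) :
    p ∈ RBM n m := by
  choose W C B hWCB using fun t => exists_rbmDist_eq (hb t) (he t)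
  exact mem_closure_of_tendsto ((tendsto_div_sum hlim hp).congr fun t => (hWCB t).symm)
    (Eventually.of_forall fun t => ⟨W t, C t, B t, rfl⟩)

end Rbm

section Face

variable {n : ℕ}

def cubeFace (I : Finset (Fin n)) (u : Fin n → Bool) : Set (Fin n → Bool) :=
  {x | ∀ i ∉ I, x i = u i}

def faceDist (I : Finset (Fin n)) (u v : Fin n → Bool) : ℕ :=
  #{i ∈ Iᶜ | v i ≠ u i}

variable {I : Finset (Fin n)} {u v : Fin n → Bool}

lemma mem_cubeFace_self : u ∈ cubeFace I u := fun _ _ => rfl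

lemma faceDist_eq_zero_iff : faceDist I u v = 0 ↔ v ∈ cubeFace I u := by
  simp [faceDist, cubeFace, filter_eq_empty_iff]

lemma faceDist_le : faceDist I u v ≤ n :=
  (card_le_univ _).trans_eq (Fintype.card_fin n)

lemma faceDist_mem_affineFunctions (I : Finset (Fin n)) (u : Fin n → Bool) :
    (fun v => (faceDist I u v : ℝ)) ∈ affineFunctions n := by
  have hdist : (fun v => (faceDist I u v : ℝ)) = ∑ i ∈ Iᶜ,
      ((1 - 2 * bval (u i)) • (fun v : Fin n → Bool => bval (v i)) + fun _ => bval (u i)) := by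
    ext v
    simp only [faceDist, natCast_card_filter, Finset.sum_apply, Pi.add_apply,
      Pi.smul_apply, smul_eq_mul]
    refine sum_congr rfl fun i _ => ?_
    cases v i <;> cases u i <;> norm_num [bval]
  rw [hdist]
  exact Submodule.sum_mem _ fun i _ => Submodule.add_mem _
    (Submodule.smul_mem _ _ (bval_apply_mem_affineFunctions i)) (const_mem_affineFunctions _)

end Face

section BlockWeight

variable {n m : ℕ} (I : Fin (m + 1) → Finset (Fin n)) (u : Fin (m + 1) → Fin n → Bool)
  (q : Fin (m + 1) → ℝ)

def visibleExponent (T : ℝ) (v : Fin n → Bool) : ℝ :=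
  Real.log (q 0 + Real.exp (-T)) - T * faceDist (I 0) (u 0) v

def hiddenExponent (T : ℝ) (j : Fin m) (v : Fin n → Bool) : ℝ :=
  T * (faceDist (I 0) (u 0) v - (n + 2) * faceDist (I j.succ) (u j.succ) v) +
    Real.log (q j.succ + Real.exp (-T)) - Real.log (q 0 + Real.exp (-T))

def blockWeight (T : ℝ) (v : Fin n → Bool) : ℝ :=
  Real.exp (visibleExponent I u q T v) * ∏ j, (1 + Real.exp (hiddenExponent I u q T j v))

lemma visibleExponent_mem_affineFunctions (T : ℝ) :
    visibleExponent I u q T ∈ affineFunctions n :=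
  Submodule.sub_mem _ (const_mem_affineFunctions _)
    (Submodule.smul_mem _ T (faceDist_mem_affineFunctions _ _))

lemma hiddenExponent_mem_affineFunctions (T : ℝ) (j : Fin m) :
    hiddenExponent I u q T j ∈ affineFunctions n :=
  Submodule.sub_mem _ (Submodule.add_mem _ (Submodule.smul_mem _ T (Submodule.sub_mem _
    (faceDist_mem_affineFunctions _ _) (Submodule.smul_mem _ ((n : ℝ) + 2)
      (faceDist_mem_affineFunctions _ _)))) (const_mem_affineFunctions _))
    (const_mem_affineFunctions _)

variable {I u q} {v : Fin n → Bool}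

lemma tendsto_exp_visibleExponent (hq : 0 ≤ q 0) (hv : v ∉ cubeFace (I 0) (u 0)) :
    Tendsto (fun T => Real.exp (visibleExponent I u q T v)) atTop (𝓝 0) := by
  have hdist : (1 : ℝ) ≤ faceDist (I 0) (u 0) v := by
    exact_mod_cast Nat.one_le_iff_ne_zero.2 (mt faceDist_eq_zero_iff.1 hv)
  refine tendsto_exp_of_le_sub (K := Real.log (q 0 + 1)) fun T hT => ?_
  have hlog := log_add_exp_neg_le hq hT
  unfold visibleExponent
  nlinarith

lemma tendsto_exp_hiddenExponent (hq : ∀ i, 0 ≤ q i) {j : Fin m}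
    (hv : v ∉ cubeFace (I j.succ) (u j.succ)) :
    Tendsto (fun T => Real.exp (hiddenExponent I u q T j v)) atTop (𝓝 0) := by
  have hdist : (1 : ℝ) ≤ faceDist (I j.succ) (u j.succ) v := by
    exact_mod_cast Nat.one_le_iff_ne_zero.2 (mt faceDist_eq_zero_iff.1 hv)
  have hdist0 : (faceDist (I 0) (u 0) v : ℝ) ≤ n := by exact_mod_cast faceDist_le
  refine tendsto_exp_of_le_sub (K := Real.log (q j.succ + 1)) fun T hT => ?_
  have hlog := log_add_exp_neg_le (hq j.succ) hT
  have hlog0 := neg_le_log_add_exp_neg (hq 0) T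
  have hmul0 := mul_le_mul_of_nonneg_left hdist0 hT
  have hmul := mul_le_mul_of_nonneg_left hdist (by positivity : 0 ≤ T * ((n : ℝ) + 2))
  unfold hiddenExponent
  nlinarith

lemma tendsto_prod_one_add_exp_hiddenExponent (hq : ∀ i, 0 ≤ q i) (s : Finset (Fin m))
    (hs : ∀ j ∈ s, v ∉ cubeFace (I j.succ) (u j.succ)) :
    Tendsto (fun T => ∏ j ∈ s, (1 + Real.exp (hiddenExponent I u q T j v))) atTop (𝓝 1) := by
  simpa using tendsto_finsetProd s fun j hj =>
    (tendsto_const_nhds (x := (1 : ℝ))).add (tendsto_exp_hiddenExponent hq (hs j hj))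

lemma tendsto_blockWeight_of_mem_zero (hq : ∀ i, 0 ≤ q i) (h0 : v ∈ cubeFace (I 0) (u 0))
    (hs : ∀ j : Fin m, v ∉ cubeFace (I j.succ) (u j.succ)) :
    Tendsto (fun T => blockWeight I u q T v) atTop (𝓝 (q 0)) := by
  have hvis : ∀ T, Real.exp (visibleExponent I u q T v) = q 0 + Real.exp (-T) := fun T => by
    rw [visibleExponent, faceDist_eq_zero_iff.2 h0, Nat.cast_zero, mul_zero, sub_zero,
      Real.exp_log (by linarith [hq 0, Real.exp_pos (-T)])]
  simpa [blockWeight, hvis] using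
    (tendsto_add_exp_neg (q 0)).mul
      (tendsto_prod_one_add_exp_hiddenExponent hq univ fun j _ => hs j)

lemma tendsto_blockWeight_of_mem_succ (hq : ∀ i, 0 ≤ q i) {k : Fin m}
    (hk : v ∈ cubeFace (I k.succ) (u k.succ)) (h0 : v ∉ cubeFace (I 0) (u 0))
    (hs : ∀ j ≠ k, v ∉ cubeFace (I j.succ) (u j.succ)) :
    Tendsto (fun T => blockWeight I u q T v) atTop (𝓝 (q k.succ)) := by
  have hpair : ∀ T, Real.exp (visibleExponent I u q T v) *
      (1 + Real.exp (hiddenExponent I u q T k v)) =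
      Real.exp (visibleExponent I u q T v) + (q k.succ + Real.exp (-T)) := fun T => by
    have hsum : visibleExponent I u q T v + hiddenExponent I u q T k v =
        Real.log (q k.succ + Real.exp (-T)) := by
      rw [visibleExponent, hiddenExponent, faceDist_eq_zero_iff.2 hk, Nat.cast_zero]
      ring
    rw [mul_one_add, ← Real.exp_add, hsum,
      Real.exp_log (by linarith [hq k.succ, Real.exp_pos (-T)])]
  have hsplit : ∀ T, blockWeight I u q T v = (Real.exp (visibleExponent I u q T v) *
      (1 + Real.exp (hiddenExponent I u q T k v))) *
      ∏ j ∈ univ.erase k, (1 + Real.exp (hiddenExponent I u q T j v)) := fun T => by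
    rw [blockWeight, mul_assoc,
      mul_prod_erase univ (fun j => 1 + Real.exp (hiddenExponent I u q T j v)) (mem_univ k)]
  simp only [hsplit, hpair]
  simpa using ((tendsto_exp_visibleExponent (hq 0) h0).add (tendsto_add_exp_neg _)).mul
    (tendsto_prod_one_add_exp_hiddenExponent hq _ fun j hj => hs j (ne_of_mem_erase hj))

lemma tendsto_blockWeight_of_mem (hq : ∀ i, 0 ≤ q i) {i : Fin (m + 1)}
    (hi : v ∈ cubeFace (I i) (u i)) (hother : ∀ j ≠ i, v ∉ cubeFace (I j) (u j)) :
    Tendsto (fun T => blockWeight I u q T v) atTop (𝓝 (q i)) := by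
  cases i using Fin.cases with
  | zero => exact tendsto_blockWeight_of_mem_zero hq hi fun j => hother _ (Fin.succ_ne_zero j)
  | succ k =>
    exact tendsto_blockWeight_of_mem_succ hq hi (hother 0 (Fin.succ_ne_zero k).symm)
      fun j hj => hother _ (Fin.succ_injective _ |>.ne hj)

lemma tendsto_blockWeight_of_forall_notMem (hq : ∀ i, 0 ≤ q i)
    (hv : ∀ i, v ∉ cubeFace (I i) (u i)) :
    Tendsto (fun T => blockWeight I u q T v) atTop (𝓝 0) := by
  simpa [blockWeight] using (tendsto_exp_visibleExponent (hq 0) (hv 0)).mul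
    (tendsto_prod_one_add_exp_hiddenExponent hq univ fun j _ => hv j.succ)

end BlockWeight

/-- If `X₁, …, X_{m+1}` are pairwise disjoint cubical subsets of `{0,1}^n`,
then every probability distribution supported on their union which is constant on each block
belongs to `RBM_{n,m}`; in particular, `RBM_{n,m}` contains the partition model of any
partition of `{0,1}^n` into `m+1` cubical blocks. -/
theorem partition_model_mem_rbm (n m : ℕ)
    (X : Fin (m + 1) → Set (Fin n → Bool)) (hX : ∀ i, IsFace (X i))
    (hdisj : ∀ i j, i ≠ j → Disjoint (X i) (X j))
    (p : (Fin n → Bool) → ℝ) (hp : IsProb p)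
    (hsupp : ∀ v, p v ≠ 0 → v ∈ ⋃ i, X i)
    (hconst : ∀ i, ∀ x ∈ X i, ∀ y ∈ X i, p x = p y) :
    p ∈ RBM n m := by
  choose I u hXu using hX
  obtain rfl : X = fun i => cubeFace (I i) (u i) := funext hXu
  set q : Fin (m + 1) → ℝ := fun i => p (u i)
  have hq : ∀ i, 0 ≤ q i := fun i => hp.1 _
  refine mem_RBM_of_tendsto (l := atTop) (visibleExponent_mem_affineFunctions I u q)
    (hiddenExponent_mem_affineFunctions I u q) hp.2 fun v => ?_
  by_cases hv : ∃ i, v ∈ cubeFace (I i) (u i)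
  · obtain ⟨i, hi⟩ := hv
    rw [hconst i v hi (u i) mem_cubeFace_self]
    exact tendsto_blockWeight_of_mem hq hi fun j hj hvj =>
      Set.disjoint_left.1 (hdisj i j hj.symm) hi hvj
  · have hpv : p v = 0 := by_contra fun hpv => hv (Set.mem_iUnion.1 (hsupp v hpv))
    rw [hpv]
    exact tendsto_blockWeight_of_forall_notMem hq (not_exists.1 hv)
end
end

section
/- Let p be a probability distribution on {0,1}^n whose support can be covered by m+1 pairs of binary vectors, each pair differing in exactly one entry (i.e., by m+1 edges of the n-cube). Then p belongs to RBM_{n,m}. -/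
/-!
Summing out a new hidden unit with weights `w` and bias `c` multiplies the unnormalized visible
marginal by `1 + exp (w ⬝ v + c)`. Any product `∏ⱼ ψⱼ (vⱼ)` of nonnegative factors is a limit of
such exponentials of affine functions (use `log ψⱼ`, or `-t` with `t → ∞` where `ψⱼ` vanishes),
and a nonnegative function supported on an edge of the cube is such a product. So from any
`r ∈ RBM_{n,m}` one reaches, in `RBM_{n,m+1}`, every mixture `c • r + u` with `u` supported on an
edge, while the visible biases alone already give every distribution supported on one edge.
Induction on the number of edges, splitting off the mass of the last edge, proves the theorem.
-/

open scoped BigOperators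

noncomputable section

open Filter Topology

section FiniteDistributions

variable {X : Type*} [Fintype X]

def normalizeSum (f : X → ℝ) : X → ℝ := fun x => f x / ∑ y, f y

lemma normalizeSum_const_mul {a : ℝ} (ha : a ≠ 0) (f : X → ℝ) :
    normalizeSum (fun x => a * f x) = normalizeSum f := by
  funext x
  simp only [normalizeSum, ← Finset.mul_sum]
  exact mul_div_mul_left _ _ ha

lemma normalizeSum_eq_self {f : X → ℝ} (hf : ∑ x, f x = 1) : normalizeSum f = f := by
  funext x
  simp [normalizeSum, hf]

lemma continuousAt_normalizeSum {f : X → ℝ} (hf : ∑ x, f x ≠ 0) :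
    ContinuousAt normalizeSum f :=
  continuousAt_pi.2 fun x => (continuous_apply x).continuousAt.div
    (continuous_finsetSum _ fun y _ => continuous_apply y).continuousAt hf

lemma IsProb.support_subset_or_eq_smul_add_indicator {p : X → ℝ} (hp : IsProb p) (L : Set X) :
    Function.support p ⊆ L ∨ ∃ c > 0, ∃ q, IsProb q ∧ Function.support q ⊆ Function.support p \ L ∧
      p = c • q + L.indicator p ∧ c + ∑ x, L.indicator p x = 1 := by
  set w := Lᶜ.indicator p
  have hw : ∀ x, 0 ≤ w x := Set.indicator_nonneg fun x _ => hp.1 x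
  have hsplit : w + L.indicator p = p := Set.indicator_compl_add_self L p
  have hsum : ∑ x, w x + ∑ x, L.indicator p x = 1 := by
    rw [← Finset.sum_add_distrib, ← hp.2]
    exact Finset.sum_congr rfl fun x _ => congrFun hsplit x
  rcases (Finset.sum_nonneg fun x _ => hw x).eq_or_lt with hzero | hpos
  · left
    intro x hx
    by_contra hxL
    have hwx : w x = p x := Set.indicator_of_mem hxL p
    exact hx (hwx ▸ (Finset.sum_eq_zero_iff_of_nonneg fun x _ => hw x).1 hzero.symm x
      (Finset.mem_univ x))
  · right
    refine ⟨_, hpos, (∑ x, w x)⁻¹ • w, ⟨fun x => ?_, ?_⟩, ?_, ?_, hsum⟩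
    · exact mul_nonneg (inv_nonneg.2 hpos.le) (hw x)
    · simp only [Pi.smul_apply, smul_eq_mul, ← Finset.mul_sum, inv_mul_cancel₀ hpos.ne']
    · refine (Function.support_const_smul_subset _ _).trans ?_
      rw [Set.support_indicator, Set.sdiff_eq, Set.inter_comm]
    · rw [smul_inv_smul₀ hpos.ne', hsplit]

end FiniteDistributions

section ProductApproximation

variable {ι : Type*} [Fintype ι]

def IsNonnegProduct (f : (ι → Bool) → ℝ) : Prop :=
  ∃ ψ : ι → Bool → ℝ, (∀ j b, 0 ≤ ψ j b) ∧ ∀ v, f v = ∏ j, ψ j (v j)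

lemma IsNonnegProduct.nonneg {f : (ι → Bool) → ℝ} (hf : IsNonnegProduct f) : 0 ≤ f := by
  obtain ⟨ψ, hψ, hf⟩ := hf
  intro v
  rw [hf v]
  exact Finset.prod_nonneg fun j _ => hψ j (v j)

def logCutoff (t a : ℝ) : ℝ := if a = 0 then -t else Real.log a

lemma tendsto_exp_logCutoff {a : ℝ} (ha : 0 ≤ a) :
    Tendsto (fun t => Real.exp (logCutoff t a)) atTop (𝓝 a) := by
  rcases ha.eq_or_lt with rfl | ha
  · simpa [logCutoff] using Real.tendsto_exp_neg_atTop_nhds_zero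
  · simp only [logCutoff, ha.ne', if_false, Real.exp_log ha]
    exact tendsto_const_nhds

lemma sum_apply_eq_sum_mul_bval_add (φ : ι → Bool → ℝ) (v : ι → Bool) :
    ∑ j, φ j (v j) = ∑ j, (φ j true - φ j false) * bval (v j) + ∑ j, φ j false := by
  rw [← Finset.sum_add_distrib]
  refine Finset.sum_congr rfl fun j _ => ?_
  cases v j <;> simp [bval]

lemma IsNonnegProduct.exists_tendsto_exp_affine {f : (ι → Bool) → ℝ} (hf : IsNonnegProduct f) :
    ∃ (w : ℝ → ι → ℝ) (c : ℝ → ℝ),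
      Tendsto (fun t v => Real.exp (∑ j, w t j * bval (v j) + c t)) atTop (𝓝 f) := by
  obtain ⟨ψ, hψ, hf⟩ := hf
  refine ⟨fun t j => logCutoff t (ψ j true) - logCutoff t (ψ j false),
    fun t => ∑ j, logCutoff t (ψ j false), tendsto_pi_nhds.2 fun v => ?_⟩
  simp only [← fun t => sum_apply_eq_sum_mul_bval_add (fun j b => logCutoff t (ψ j b)) v,
    Real.exp_sum, hf v]
  exact tendsto_finsetProd _ fun j _ => tendsto_exp_logCutoff (hψ j (v j))

end ProductApproximation

lemma IsEdge.isNonnegProduct_of_support_subset {n : ℕ} {E : Set (Fin n → Bool)} (hE : IsEdge E)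
    {u : (Fin n → Bool) → ℝ} (hu : 0 ≤ u) (hsupp : Function.support u ⊆ E) :
    IsNonnegProduct u := by
  obtain ⟨x, i, rfl⟩ := hE
  refine ⟨fun j b => if j = i then u (Function.update x i b) else if b = x j then 1 else 0,
    fun j b => ?_, fun v => ?_⟩
  · dsimp only
    split_ifs
    exacts [hu _, zero_le_one, le_rfl]
  dsimp only
  rw [Fintype.prod_eq_mul_prod_compl i, if_pos rfl]
  by_cases hv : ∀ j ≠ i, v j = x j
  · have hvx : Function.update x i (v i) = v := by
      funext j
      by_cases hj : j = i
      · subst hj; simp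
      · simp [hj, hv j hj]
    rw [hvx, Finset.prod_eq_one fun j hj => ?_, mul_one]
    rw [Finset.mem_compl, Finset.mem_singleton] at hj
    simp [hj, hv j hj]
  · obtain ⟨j, hji, hvj⟩ := not_forall₂.1 hv
    have hv_notin : v ∉ ({x, Function.update x i (!x i)} : Set (Fin n → Bool)) := by
      rintro (rfl | rfl)
      · exact hvj rfl
      · exact hvj (Function.update_of_ne hji _ _)
    rw [Function.notMem_support.1 fun h => hv_notin (hsupp h),
      Finset.prod_eq_zero (Finset.mem_compl.2 (Finset.notMem_singleton.2 hji)) (by simp [hji, hvj]),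
      mul_zero]

section RBM

variable {n m : ℕ}

def rbmUnnorm (n m : ℕ) (W : Matrix (Fin m) (Fin n) ℝ) (C : Fin m → ℝ) (B : Fin n → ℝ)
    (v : Fin n → Bool) : ℝ :=
  ∑ h : Fin m → Bool,
    Real.exp ((∑ j, ∑ i, bval (h j) * W j i * bval (v i)) +
      (∑ j, C j * bval (h j)) + (∑ i, B i * bval (v i)))

variable (W : Matrix (Fin m) (Fin n) ℝ) (C : Fin m → ℝ) (B : Fin n → ℝ)

lemma rbmDist_eq_normalizeSum : rbmDist n m W C B = normalizeSum (rbmUnnorm n m W C B) := rfl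

lemma rbmUnnorm_pos (v : Fin n → Bool) : 0 < rbmUnnorm n m W C B v :=
  Finset.sum_pos (fun _ _ => Real.exp_pos _) Finset.univ_nonempty

lemma sum_rbmUnnorm_pos : 0 < ∑ v, rbmUnnorm n m W C B v :=
  Finset.sum_pos (fun v _ => rbmUnnorm_pos W C B v) Finset.univ_nonempty

lemma rbmDist_pos (v : Fin n → Bool) : 0 < rbmDist n m W C B v :=
  div_pos (rbmUnnorm_pos W C B v) (sum_rbmUnnorm_pos W C B)

lemma sum_rbmDist : ∑ v, rbmDist n m W C B v = 1 := by
  rw [rbmDist_eq_normalizeSum]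
  simp only [normalizeSum]
  rw [← Finset.sum_div, div_self (sum_rbmUnnorm_pos W C B).ne']

lemma rbmUnnorm_zero (v : Fin n → Bool) :
    rbmUnnorm n m 0 0 B v = 2 ^ m * Real.exp (∑ i, B i * bval (v i)) := by
  simp [rbmUnnorm, Finset.card_univ]

lemma rbmUnnorm_cons (w : Fin n → ℝ) (c : ℝ) (v : Fin n → Bool) :
    rbmUnnorm n (m + 1) (Matrix.of (Fin.cons w W)) (Fin.cons c C) B v =
      rbmUnnorm n m W C B v * (1 + Real.exp ((∑ i, w i * bval (v i)) + c)) := by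
  rw [rbmUnnorm, ← (Fin.consEquiv fun _ : Fin (m + 1) => Bool).sum_comp, Fintype.sum_prod_type,
    Fintype.sum_bool, rbmUnnorm, mul_add, mul_one, Finset.sum_mul, add_comm]
  have hzero : ∀ i, (Fin.cons w W : Fin (m + 1) → Fin n → ℝ) 0 i = w i := fun _ => rfl
  have hsucc : ∀ j i, (Fin.cons w W : Fin (m + 1) → Fin n → ℝ) j.succ i = W j i := fun _ _ => rfl
  congr 1 <;> refine Finset.sum_congr rfl fun h _ => ?_
  · simp [Fin.sum_univ_succ, bval, hsucc]
  · rw [← Real.exp_add]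
    simp only [Fin.consEquiv_apply, Fin.sum_univ_succ, Fin.cons_zero, Fin.cons_succ,
      Matrix.of_apply, hzero, hsucc, show bval true = 1 from rfl, one_mul]
    congr 1
    ring

lemma rbmDist_zero_zero (c : ℝ) :
    rbmDist n m 0 0 B = normalizeSum fun v => Real.exp (∑ i, B i * bval (v i) + c) := by
  rw [rbmDist_eq_normalizeSum, funext (rbmUnnorm_zero B), normalizeSum_const_mul (by positivity)]
  simp only [Real.exp_add, mul_comm _ (Real.exp c)]
  rw [normalizeSum_const_mul (Real.exp_ne_zero c)]

/-- Already `W = 0` and `C = 0` suffice. -/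
lemma IsNonnegProduct.normalizeSum_mem_rbm {f : (Fin n → Bool) → ℝ} (hf : IsNonnegProduct f)
    (hsum : ∑ v, f v ≠ 0) : normalizeSum f ∈ RBM n m := by
  obtain ⟨w, c, hlim⟩ := hf.exists_tendsto_exp_affine
  exact mem_closure_of_tendsto ((continuousAt_normalizeSum hsum).tendsto.comp hlim)
    (Eventually.of_forall fun t => ⟨0, 0, w t, (rbmDist_zero_zero (w t) (c t)).symm⟩)

lemma IsNonnegProduct.normalizeSum_rbmDist_mul_one_add_mem_rbm {Ψ : (Fin n → Bool) → ℝ}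
    (hΨ : IsNonnegProduct Ψ) :
    normalizeSum (fun v => rbmDist n m W C B v * (1 + Ψ v)) ∈ RBM n (m + 1) := by
  obtain ⟨w, c, hlim⟩ := hΨ.exists_tendsto_exp_affine
  set R := rbmUnnorm n m W C B
  have hR : (fun v => rbmDist n m W C B v * (1 + Ψ v)) =
      fun v => (∑ u, R u)⁻¹ * (R v * (1 + Ψ v)) := by
    funext v
    rw [rbmDist_eq_normalizeSum, normalizeSum]
    ring
  have hsum : ∑ v, R v * (1 + Ψ v) ≠ 0 :=
    (Finset.sum_pos (fun v _ => mul_pos (rbmUnnorm_pos W C B v)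
      (add_pos_of_pos_of_nonneg one_pos (hΨ.nonneg v))) Finset.univ_nonempty).ne'
  have hfactor : Tendsto (fun t v => R v * (1 + Real.exp (∑ i, w t i * bval (v i) + c t)))
      atTop (𝓝 fun v => R v * (1 + Ψ v)) :=
    tendsto_pi_nhds.2 fun v =>
      tendsto_const_nhds.mul (tendsto_const_nhds.add (tendsto_pi_nhds.1 hlim v))
  rw [hR, normalizeSum_const_mul (inv_ne_zero (sum_rbmUnnorm_pos W C B).ne')]
  refine mem_closure_of_tendsto ((continuousAt_normalizeSum hsum).tendsto.comp hfactor)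
    (Eventually.of_forall fun t => ⟨Matrix.of (Fin.cons (w t) W), Fin.cons (c t) C, B, ?_⟩)
  rw [rbmDist_eq_normalizeSum, funext (rbmUnnorm_cons W C B (w t) (c t))]
  rfl

end RBM

lemma mem_rbm_of_support_subset_edge {n m : ℕ} {p : (Fin n → Bool) → ℝ} (hp : IsProb p)
    {E : Set (Fin n → Bool)} (hE : IsEdge E) (hsupp : Function.support p ⊆ E) : p ∈ RBM n m := by
  rw [← normalizeSum_eq_self hp.2]
  exact (hE.isNonnegProduct_of_support_subset hp.1 hsupp).normalizeSum_mem_rbm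
    (hp.2.symm ▸ one_ne_zero)

/-- `c • r + u` is proportional to `r * (1 + u / (c * r))`, and `u / (c * r)` is again supported
on the edge. -/
lemma smul_add_mem_rbm_succ {n m : ℕ} {q u : (Fin n → Bool) → ℝ} {c : ℝ} {E : Set (Fin n → Bool)}
    (hq : q ∈ RBM n m) (hE : IsEdge E) (hu : 0 ≤ u) (hsupp : Function.support u ⊆ E)
    (hc : 0 < c) (hsum : c + ∑ v, u v = 1) : c • q + u ∈ RBM n (m + 1) := by
  suffices h : RBM n m ⊆ (fun q => c • q + u) ⁻¹' RBM n (m + 1) from h hq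
  refine closure_minimal ?_ (isClosed_closure.preimage (by fun_prop))
  rintro _ ⟨W, C, B, rfl⟩
  set r := rbmDist n m W C B
  have hr : ∀ v, 0 < r v := rbmDist_pos W C B
  have hΨ : IsNonnegProduct fun v => u v / (c * r v) :=
    hE.isNonnegProduct_of_support_subset
      (fun v => div_nonneg (hu v) (mul_pos hc (hr v)).le)
      ((Function.support_div _ _).subset.trans (Set.inter_subset_left.trans hsupp))
  have hmix : (fun v => r v * (1 + u v / (c * r v))) = fun v => c⁻¹ * (c • r + u) v := by
    funext v
    field_simp [(hr v).ne']
    simp only [Pi.add_apply, Pi.smul_apply, smul_eq_mul]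
    ring
  have hnorm : ∑ v, (c • r + u) v = 1 := by
    simp only [Pi.add_apply, Pi.smul_apply, smul_eq_mul, Finset.sum_add_distrib, ← Finset.mul_sum,
      r, sum_rbmDist, mul_one, hsum]
  have := hΨ.normalizeSum_rbmDist_mul_one_add_mem_rbm W C B
  rwa [hmix, normalizeSum_const_mul (inv_ne_zero hc.ne'), normalizeSum_eq_self hnorm] at this

/-- Any probability distribution on `{0,1}^n` whose support can be covered by
`m+1` pairs of vectors differing in exactly one entry (edges of the `n`-cube) belongs to
`RBM_{n,m}`. -/
theorem support_covered_by_edges_mem_rbm (n m : ℕ)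
    (p : (Fin n → Bool) → ℝ) (hp : IsProb p)
    (E : Fin (m + 1) → Set (Fin n → Bool)) (hE : ∀ i, IsEdge (E i))
    (hcover : {v | p v ≠ 0} ⊆ ⋃ i, E i) :
    p ∈ RBM n m := by
  induction m generalizing p with
  | zero =>
    exact mem_rbm_of_support_subset_edge hp (hE 0) <|
      hcover.trans (Set.iUnion_subset fun i => by rw [Fin.fin_one_eq_zero i])
  | succ m ih =>
    rcases hp.support_subset_or_eq_smul_add_indicator (E (Fin.last _)) with
      hsupp | ⟨c, hc, q, hq, hqsupp, hpq, hsum⟩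
    · exact mem_rbm_of_support_subset_edge hp (hE _) hsupp
    have hq_cover : {v | q v ≠ 0} ⊆ ⋃ k : Fin (m + 1), E k.castSucc := by
      intro v hv
      obtain ⟨hpv, hvL⟩ := hqsupp hv
      obtain ⟨k, hk⟩ | hk := Fin.exists_fin_succ'.1 (Set.mem_iUnion.1 (hcover hpv))
      exacts [Set.mem_iUnion.2 ⟨k, hk⟩, absurd hk hvL]
    rw [hpq]
    exact smul_add_mem_rbm_succ (ih q hq (fun k => E k.castSucc) (fun k => hE _) hq_cover)
      (hE _) (Set.indicator_nonneg fun v _ => hp.1 v) Set.support_indicator_subset hc hsum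
end
end

section
/- Let ξ = {X₁, …, X_m} be a partition of a finite set X and let M₁, …, M_m be nonempty sets of probability distributions with M_i ⊆ P(X_i). Let M be the set of all mixtures Σ_i α_i p_i with p_i ∈ M_i, α_i ≥ 0, Σ_i α_i = 1. Then the maximal approximation error of M equals the maximum of the errors of the components: D_M := max_{p ∈ P(X)} D(p‖M) = max_{i=1,…,m} max_{r ∈ P(X_i)} D(r‖M_i). -/
open scoped BigOperators

noncomputable section

/-!
Restricted to a block `Xᵢ`, a mixture `q = ∑ αⱼ rⱼ` is `αᵢ rᵢ`. For `≤`: given `p`, take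
`αᵢ = p(Xᵢ)` and nearly optimal `rᵢ` for the conditionals `p(· | Xᵢ)`; the chain rule gives
`D(p‖q) = ∑ αᵢ D(p(· | Xᵢ)‖rᵢ)`. For `≥`: if `r ∈ P(Xᵢ)` and `q` is a limit of mixtures with
`D(r‖q) < ∞`, then `q(Xᵢ) > 0`, so by continuity of conditioning `q(· | Xᵢ)` lies in the closure
of `Mᵢ`; it dominates `q` on `Xᵢ`, hence `D(r‖q(· | Xᵢ)) ≤ D(r‖q)`.
-/

open Function

section KL

variable {X : Type*} [Fintype X]

lemma klTerm_zero_left (b : ℝ) : klTerm 0 b = 0 := if_pos rfl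

lemma klTerm_mul_mul {a b c : ℝ} (hc : c ≠ 0) : klTerm (c * a) (c * b) = c * klTerm a b := by
  unfold klTerm
  by_cases ha : a = 0
  · simp [ha]
  · rw [if_neg (mul_ne_zero hc ha), if_neg ha, mul_div_mul_left a b hc, mul_assoc]

lemma KL_le_coe_iff {p q : X → ℝ} {t : ℝ} :
    KL p q ≤ t ↔ (∀ x, p x ≠ 0 → q x ≠ 0) ∧ ∑ x, klTerm (p x) (q x) ≤ t := by
  unfold KL
  split_ifs with h
  · rw [EReal.coe_le_coe_iff]
    exact ⟨fun hs => ⟨h, hs⟩, And.right⟩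
  · simp [h]

lemma KL_le_KL_of_le {p q q' : X → ℝ} (hp : ∀ x, 0 ≤ p x)
    (hq : ∀ x, p x ≠ 0 → 0 ≤ q x ∧ q x ≤ q' x) : KL p q' ≤ KL p q := by
  by_cases hsupp : ∀ x, p x ≠ 0 → q x ≠ 0
  · have hpos : ∀ x, p x ≠ 0 → 0 < q x := fun x hx => (hq x hx).1.lt_of_ne' (hsupp x hx)
    have hsupp' : ∀ x, p x ≠ 0 → q' x ≠ 0 :=
      fun x hx => ((hpos x hx).trans_le (hq x hx).2).ne'
    unfold KL
    rw [if_pos hsupp, if_pos hsupp', EReal.coe_le_coe_iff]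
    refine Finset.sum_le_sum fun x _ => ?_
    by_cases hx : p x = 0
    · simp only [hx, klTerm_zero_left, le_refl]
    · simp only [klTerm, if_neg hx]
      have hpx := (hp x).lt_of_ne' hx
      exact mul_le_mul_of_nonneg_left (Real.logb_le_logb_of_le one_lt_two
        (div_pos hpx ((hpos x hx).trans_le (hq x hx).2))
        (div_le_div_of_nonneg_left hpx.le (hpos x hx) (hq x hx).2)) hpx.le
  · unfold KL
    rw [if_neg hsupp]
    exact le_top

end KL

section BlockMass

variable {X : Type*}

def blockMass (s : Finset X) (p : X → ℝ) : ℝ := ∑ x ∈ s, p x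

lemma continuous_blockMass (s : Finset X) : Continuous (blockMass s) :=
  continuous_finsetSum _ fun x _ => continuous_apply x

lemma blockMass_nonneg {s : Finset X} {p : X → ℝ} (hp : ∀ x, 0 ≤ p x) : 0 ≤ blockMass s p :=
  Finset.sum_nonneg fun x _ => hp x

lemma eq_zero_of_blockMass_eq_zero {s : Finset X} {p : X → ℝ} (hp : ∀ x, 0 ≤ p x)
    (h : blockMass s p = 0) {x : X} (hx : x ∈ s) : p x = 0 :=
  (Finset.sum_eq_zero_iff_of_nonneg fun y _ => hp y).1 h x hx

variable [DecidableEq X]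

/-- The conditional distribution `p(· | s)`; it is `0` when `p(s) = 0`. -/
def condOn (s : Finset X) (p : X → ℝ) : X → ℝ :=
  fun x => if x ∈ s then p x / blockMass s p else 0

lemma continuousAt_condOn {s : Finset X} {p : X → ℝ} (h : blockMass s p ≠ 0) :
    ContinuousAt (condOn s) p := by
  refine continuousAt_pi.2 fun x => ?_
  by_cases hx : x ∈ s
  · simp only [condOn, hx, if_true]
    exact (continuous_apply x).continuousAt.div (continuous_blockMass s).continuousAt h
  · simp only [condOn, hx, if_false]
    exact continuousAt_const

end BlockMass

section Simplex

variable {X : Type*} [Fintype X]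

lemma isClosed_setOf_isProb : IsClosed {p : X → ℝ | IsProb p} := by
  simp only [IsProb, Set.ofPred_and, Set.ofPred_forall]
  exact (isClosed_iInter fun x => isClosed_le continuous_const (continuous_apply x)).inter
    (isClosed_eq (continuous_finsetSum _ fun x _ => continuous_apply x) continuous_const)

/-- The paper's `P(s)`, viewed inside `P(X)`. -/
def probOn (s : Finset X) : Set (X → ℝ) := {r | IsProb r ∧ ∀ x ∉ s, r x = 0}

lemma isClosed_probOn (s : Finset X) : IsClosed (probOn s) := by
  simp only [probOn, Set.ofPred_and, Set.ofPred_forall]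
  exact isClosed_setOf_isProb.inter (isClosed_iInter fun x => isClosed_iInter fun _ =>
    isClosed_eq (continuous_apply x) continuous_const)

lemma blockMass_eq_one_of_mem_probOn {s : Finset X} {r : X → ℝ} (hr : r ∈ probOn s) :
    blockMass s r = 1 := by
  rw [blockMass, ← hr.1.2]
  exact Finset.sum_subset (Finset.subset_univ s) fun x _ hx => hr.2 x hx

variable [DecidableEq X]

lemma condOn_mem_probOn {s : Finset X} {p : X → ℝ} (hp : ∀ x, 0 ≤ p x)
    (h : 0 < blockMass s p) : condOn s p ∈ probOn s := by
  refine ⟨⟨fun x => ?_, ?_⟩, fun x hx => if_neg hx⟩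
  · unfold condOn
    split_ifs
    exacts [div_nonneg (hp x) h.le, le_rfl]
  · simp only [condOn]
    rw [Finset.sum_ite_mem, Finset.univ_inter, ← Finset.sum_div]
    exact div_self h.ne'

end Simplex

section Mixture

variable {X ι : Type*} [Fintype ι]

def mix (α : ι → ℝ) (r : ι → X → ℝ) : X → ℝ := fun x => ∑ i, α i * r i x

def mixtureModel (M : ι → Set (X → ℝ)) : Set (X → ℝ) :=
  {q | ∃ (α : ι → ℝ) (r : ι → X → ℝ),
    (∀ i, 0 ≤ α i) ∧ (∑ i, α i = 1) ∧ (∀ i, r i ∈ M i) ∧ q = mix α r}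

lemma continuous_mix (α : ι → ℝ) : Continuous (mix (X := X) α) :=
  continuous_pi fun x => continuous_finsetSum _ fun i _ =>
    continuous_const.mul ((continuous_apply x).comp (continuous_apply i))

lemma mix_mem_closure_mixtureModel {M : ι → Set (X → ℝ)} {α : ι → ℝ} {r : ι → X → ℝ}
    (hα0 : ∀ i, 0 ≤ α i) (hα1 : ∑ i, α i = 1) (hr : ∀ i, r i ∈ closure (M i)) :
    mix α r ∈ closure (mixtureModel M) := by
  refine map_mem_closure (continuous_mix α) (s := Set.univ.pi M) ?_ ?_
  · rw [closure_pi_set]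
    exact fun i _ => hr i
  · exact fun r' hr' => ⟨α, r', hα0, hα1, fun i => hr' i (Set.mem_univ i), rfl⟩

variable [Fintype X]

lemma isProb_mix {α : ι → ℝ} {r : ι → X → ℝ} (hα0 : ∀ i, 0 ≤ α i) (hα1 : ∑ i, α i = 1)
    (hr : ∀ i, IsProb (r i)) : IsProb (mix α r) := by
  refine ⟨fun x => Finset.sum_nonneg fun i _ => mul_nonneg (hα0 i) ((hr i).1 x), ?_⟩
  simp only [mix]
  rw [Finset.sum_comm]
  simp only [← Finset.mul_sum, (hr _).2, mul_one, hα1]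

lemma closure_mixtureModel_subset {M : ι → Set (X → ℝ)} (hM : ∀ i, ∀ q ∈ M i, IsProb q) :
    closure (mixtureModel M) ⊆ {p | IsProb p} := by
  refine closure_minimal ?_ isClosed_setOf_isProb
  rintro _ ⟨α, r, hα0, hα1, hr, rfl⟩
  exact isProb_mix hα0 hα1 fun i => hM i _ (hr i)

end Mixture

section Partition

variable {X ι : Type*} [Fintype ι] {B : ι → Finset X}

lemma mix_apply_of_mem (hdisj : Pairwise (Disjoint on B)) {α : ι → ℝ} {r : ι → X → ℝ}
    (hr : ∀ j, ∀ x ∉ B j, r j x = 0) {i : ι} {x : X} (hx : x ∈ B i) :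
    mix α r x = α i * r i x := by
  refine Finset.sum_eq_single i (fun j _ hji => ?_) (fun h => absurd (Finset.mem_univ i) h)
  rw [hr j x fun hxj => Finset.disjoint_left.1 (hdisj hji) hxj hx, mul_zero]

variable [Fintype X]

lemma sum_eq_sum_blocks (hdisj : Pairwise (Disjoint on B)) (hcover : ∀ x, ∃ i, x ∈ B i)
    (f : X → ℝ) : ∑ x, f x = ∑ i, ∑ x ∈ B i, f x := by
  classical
  rw [← Finset.sum_biUnion fun i _ j _ h => hdisj h]
  congr 1
  ext x
  simpa using hcover x

lemma sum_blockMass_eq_one (hdisj : Pairwise (Disjoint on B)) (hcover : ∀ x, ∃ i, x ∈ B i)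
    {p : X → ℝ} (hp : IsProb p) : ∑ i, blockMass (B i) p = 1 :=
  (sum_eq_sum_blocks hdisj hcover p).symm.trans hp.2

lemma blockMass_mix (hdisj : Pairwise (Disjoint on B)) {α : ι → ℝ} {r : ι → X → ℝ}
    (hr : ∀ j, r j ∈ probOn (B j)) (i : ι) : blockMass (B i) (mix α r) = α i := by
  have hri : ∑ x ∈ B i, r i x = 1 := blockMass_eq_one_of_mem_probOn (hr i)
  rw [blockMass, Finset.sum_congr rfl fun x hx => mix_apply_of_mem hdisj (fun j => (hr j).2) hx,
    ← Finset.mul_sum, hri, mul_one]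

variable [DecidableEq X]

lemma condOn_mix (hdisj : Pairwise (Disjoint on B)) {α : ι → ℝ} {r : ι → X → ℝ}
    (hr : ∀ j, r j ∈ probOn (B j)) {i : ι} (hα : α i ≠ 0) : condOn (B i) (mix α r) = r i := by
  funext x
  by_cases hx : x ∈ B i
  · simp only [condOn, if_pos hx, blockMass_mix hdisj hr,
      mix_apply_of_mem hdisj (fun j => (hr j).2) hx, mul_div_cancel_left₀ _ hα]
  · simp only [condOn, if_neg hx, (hr i).2 x hx]

/-- Chain rule for the divergence from a mixture with block weights `blockMass (B i) p`. -/
lemma sum_klTerm_mix_eq (hdisj : Pairwise (Disjoint on B)) (hcover : ∀ x, ∃ i, x ∈ B i)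
    {p : X → ℝ} (hp : ∀ x, 0 ≤ p x) {r : ι → X → ℝ} (hr : ∀ j, ∀ x ∉ B j, r j x = 0) :
    ∑ x, klTerm (p x) (mix (fun i => blockMass (B i) p) r x) =
      ∑ i, blockMass (B i) p * ∑ x, klTerm (condOn (B i) p x) (r i x) := by
  rw [sum_eq_sum_blocks hdisj hcover]
  refine Finset.sum_congr rfl fun i _ => ?_
  rcases eq_or_ne (blockMass (B i) p) 0 with h0 | hpos
  · rw [h0, zero_mul]
    exact Finset.sum_eq_zero fun x hx => by
      rw [eq_zero_of_blockMass_eq_zero hp h0 hx, klTerm_zero_left]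
  · rw [Finset.mul_sum, ← Finset.sum_subset (Finset.subset_univ (B i)) fun x _ hx => by
      simp only [condOn, if_neg hx, klTerm_zero_left, mul_zero]]
    refine Finset.sum_congr rfl fun x hx => ?_
    rw [mix_apply_of_mem hdisj hr hx, ← klTerm_mul_mul hpos]
    simp only [condOn, if_pos hx, mul_div_cancel₀ _ hpos]

lemma KL_mix_le (hdisj : Pairwise (Disjoint on B)) (hcover : ∀ x, ∃ i, x ∈ B i)
    {p : X → ℝ} (hp : IsProb p) {r : ι → X → ℝ} (hr : ∀ j, ∀ x ∉ B j, r j x = 0) {t : ℝ}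
    (h : ∀ i, 0 < blockMass (B i) p → KL (condOn (B i) p) (r i) ≤ t) :
    KL p (mix (fun i => blockMass (B i) p) r) ≤ t := by
  rw [KL_le_coe_iff]
  constructor
  · intro x hx
    obtain ⟨i, hxi⟩ := hcover x
    have hα : 0 < blockMass (B i) p := (blockMass_nonneg hp.1).lt_of_ne'
      fun h0 => hx (eq_zero_of_blockMass_eq_zero hp.1 h0 hxi)
    rw [mix_apply_of_mem hdisj hr hxi]
    refine mul_ne_zero hα.ne' ((KL_le_coe_iff.1 (h i hα)).1 x ?_)
    simp only [condOn, if_pos hxi]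
    exact div_ne_zero hx hα.ne'
  · rw [sum_klTerm_mix_eq hdisj hcover hp.1 hr]
    calc ∑ i, blockMass (B i) p * ∑ x, klTerm (condOn (B i) p x) (r i x)
        ≤ ∑ i, blockMass (B i) p * t := Finset.sum_le_sum fun i _ => ?_
      _ = t := by rw [← Finset.sum_mul, sum_blockMass_eq_one hdisj hcover hp, one_mul]
    rcases (blockMass_nonneg hp.1).eq_or_lt with h0 | hα
    · rw [← h0, zero_mul, zero_mul]
    · exact mul_le_mul_of_nonneg_left (KL_le_coe_iff.1 (h i hα)).2 hα.le

variable {M : ι → Set (X → ℝ)}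

lemma condOn_mem_closure (hdisj : Pairwise (Disjoint on B)) (hM : ∀ i, M i ⊆ probOn (B i))
    {q : X → ℝ} (hq : q ∈ closure (mixtureModel M)) {i : ι} (hmass : 0 < blockMass (B i) q) :
    condOn (B i) q ∈ closure (M i) := by
  have hU : IsOpen {q : X → ℝ | 0 < blockMass (B i) q} :=
    isOpen_lt continuous_const (continuous_blockMass _)
  refine (continuousAt_condOn hmass.ne').continuousWithinAt.mem_closure
    (hU.inter_closure ⟨hmass, hq⟩) ?_
  rintro _ ⟨hpos, α, r, -, -, hr, rfl⟩
  have hr' : ∀ j, r j ∈ probOn (B j) := fun j => hM j (hr j)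
  rw [Set.mem_ofPred_eq, blockMass_mix hdisj hr'] at hpos
  rw [condOn_mix hdisj hr' hpos.ne']
  exact hr i

lemma KLset_closure_le_KLset_closure_mixtureModel (hdisj : Pairwise (Disjoint on B))
    (hM : ∀ i, M i ⊆ probOn (B i)) {i : ι} {p : X → ℝ} (hp : p ∈ probOn (B i)) :
    KLset p (closure (M i)) ≤ KLset p (closure (mixtureModel M)) := by
  refine le_iInf₂ fun q hq => ?_
  obtain ⟨hq0, hq1⟩ : IsProb q := closure_mixtureModel_subset (fun j _ hq => (hM j hq).1) hq
  by_cases hsupp : ∀ x, p x ≠ 0 → q x ≠ 0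
  · have hB : ∀ x, p x ≠ 0 → x ∈ B i := fun x hx => by_contra fun hxB => hx (hp.2 x hxB)
    obtain ⟨x, hx⟩ : ∃ x, p x ≠ 0 := by
      by_contra! h
      simpa [h] using hp.1.2
    have hmass : 0 < blockMass (B i) q := ((hq0 x).lt_of_ne' (hsupp x hx)).trans_le
      (Finset.single_le_sum (fun y _ => hq0 y) (hB x hx))
    have hmass_le : blockMass (B i) q ≤ 1 := hq1 ▸
      Finset.sum_le_sum_of_subset_of_nonneg (Finset.subset_univ _) fun y _ _ => hq0 y
    refine (iInf₂_le _ (condOn_mem_closure hdisj hM hq hmass)).trans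
      (KL_le_KL_of_le hp.1.1 fun y hy => ?_)
    simp only [condOn, if_pos (hB y hy)]
    exact ⟨hq0 y, le_div_self (hq0 y) hmass hmass_le⟩
  · unfold KL
    rw [if_neg hsupp]
    exact le_top

lemma KLset_closure_mixtureModel_le (hdisj : Pairwise (Disjoint on B))
    (hcover : ∀ x, ∃ i, x ∈ B i) (hMne : ∀ i, (M i).Nonempty) (hM : ∀ i, M i ⊆ probOn (B i))
    {p : X → ℝ} (hp : IsProb p) :
    KLset p (closure (mixtureModel M)) ≤ ⨆ i, ⨆ r ∈ probOn (B i), KLset r (closure (M i)) := by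
  refine EReal.le_of_forall_lt_iff_le.1 fun t ht => ?_
  have hchoice : ∀ i, ∃ s ∈ closure (M i),
      0 < blockMass (B i) p → KL (condOn (B i) p) s ≤ t := by
    intro i
    by_cases hα : 0 < blockMass (B i) p
    · have hlt : KLset (condOn (B i) p) (closure (M i)) < t :=
        (le_iSup₂_of_le (f := fun r _ => KLset r (closure (M i))) _
          (condOn_mem_probOn hp.1 hα) le_rfl |>.trans (le_iSup_of_le i le_rfl)).trans_lt ht
      obtain ⟨s, hs, hst⟩ : ∃ s ∈ closure (M i), KL (condOn (B i) p) s < t := by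
        simpa only [KLset, iInf_lt_iff, exists_prop] using hlt
      exact ⟨s, hs, fun _ => hst.le⟩
    · obtain ⟨s, hs⟩ := hMne i
      exact ⟨s, subset_closure hs, fun h => absurd h hα⟩
  choose s hs hKL using hchoice
  have hsupp : ∀ j, ∀ x ∉ B j, s j x = 0 := fun j => (closure_minimal (hM j) (isClosed_probOn _) (hs j)).2
  exact (iInf₂_le _ (mix_mem_closure_mixtureModel (fun i => blockMass_nonneg hp.1)
    (sum_blockMass_eq_one hdisj hcover hp) hs)).trans (KL_mix_le hdisj hcover hp hsupp hKL)

end Partition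

/-- Let `{X₁,…,X_m}` (blocks `B i`) partition a finite set `X` and let
`M i ⊆ P(Xᵢ)` be nonempty. Then the maximal approximation error of the mixture model `MixM`
equals the maximum of the errors of the components:
`max_{p ∈ P(X)} D(p‖MixM) = max_i max_{r ∈ P(Xᵢ)} D(r‖M i)`. -/
theorem max_kl_mixture_partition {X : Type*} [Fintype X] (m : ℕ)
    (B : Fin m → Finset X)
    (hdisj : ∀ i j, i ≠ j → Disjoint (B i) (B j))
    (hcover : ∀ x, ∃ i, x ∈ B i)
    (M : Fin m → Set (X → ℝ)) (hMne : ∀ i, (M i).Nonempty)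
    (hM : ∀ i, ∀ q ∈ M i, IsProb q ∧ ∀ x ∉ B i, q x = 0)
    (MixM : Set (X → ℝ))
    (hMixM : MixM = {q | ∃ (α : Fin m → ℝ) (r : Fin m → X → ℝ),
        (∀ i, 0 ≤ α i) ∧ (∑ i, α i = 1) ∧ (∀ i, r i ∈ M i) ∧
        q = fun x => ∑ i, α i * r i x}) :
    (⨆ p ∈ {p : X → ℝ | IsProb p}, KLset p (closure MixM)) =
      ⨆ i, ⨆ r ∈ {r : X → ℝ | IsProb r ∧ ∀ x ∉ B i, r x = 0},
        KLset r (closure (M i)) := by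
  classical
  have hpart : Pairwise (Disjoint on B) := fun i j h => hdisj i j h
  have hM' : ∀ i, M i ⊆ probOn (B i) := fun i q hq => hM i q hq
  have hMix : MixM = mixtureModel M := hMixM
  subst hMix
  refine le_antisymm (iSup₂_le fun p hp => KLset_closure_mixtureModel_le hpart hcover hMne hM' hp)
    (iSup_le fun i => iSup₂_le fun r hr => ?_)
  exact (KLset_closure_le_KLset_closure_mixtureModel hpart hM' hr).trans
    (le_iSup₂_of_le r hr.1 le_rfl)
end
end

section
/- Let ξ = {X₁, …, X_m} be a partition of a finite set X. Then the maximal Kullback–Leibler divergence to the partition model P_ξ equals D_{P_ξ} = max_{i=1,…,m} log₂|X_i|. -/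
open scoped BigOperators

noncomputable section

/-!
Averaging `p` over each block gives a distribution `q` of the partition model with
`p x ≤ |Xᵢ| q x` on the block `Xᵢ ∋ x`, so `D(p‖q) ≤ max_i log₂ |Xᵢ|`. Conversely, a member `q`
of the model puts mass at most `1 / |Xᵢ|` on each point of `Xᵢ`, so the point mass at such a
point is at divergence at least `log₂ |Xᵢ|` from every `q`.
-/

open Finset Real

section KL

variable {X : Type*} [Fintype X]

theorem KL_le_logb_of_le_mul {p q : X → ℝ} {c : ℝ} (hp : IsProb p) (hc : 0 < c)
    (hpq : ∀ x, p x ≤ c * q x) : KL p q ≤ logb 2 c := by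
  have hq_pos : ∀ x, p x ≠ 0 → 0 < q x := fun x hx =>
    pos_of_mul_pos_right (((hp.1 x).lt_of_ne' hx).trans_le (hpq x)) hc.le
  have hterm : ∀ x, klTerm (p x) (q x) ≤ p x * logb 2 c := by
    intro x
    by_cases hx : p x = 0
    · simp [klTerm, hx]
    · have hpx : 0 < p x := (hp.1 x).lt_of_ne' hx
      have hratio : p x / q x ≤ c := (div_le_iff₀ (hq_pos x hx)).2 (hpq x)
      rw [klTerm, if_neg hx]
      exact mul_le_mul_of_nonneg_left
        (logb_le_logb_of_le one_lt_two (div_pos hpx (hq_pos x hx)) hratio) hpx.le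
  have hsum : ∑ x, klTerm (p x) (q x) ≤ logb 2 c :=
    calc ∑ x, klTerm (p x) (q x) ≤ ∑ x, p x * logb 2 c := sum_le_sum fun x _ => hterm x
      _ = logb 2 c := by rw [← sum_mul, hp.2, one_mul]
  rw [KL, if_pos fun x hx => (hq_pos x hx).ne']
  exact_mod_cast hsum

theorem isProb_single [DecidableEq X] (x₀ : X) : IsProb (Pi.single x₀ (1 : ℝ)) :=
  ⟨fun x => by by_cases hx : x = x₀ <;> simp [hx], by simp⟩

theorem logb_le_KL_single [DecidableEq X] {q : X → ℝ} {x₀ : X} {c : ℝ} (hc : 0 < c)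
    (hq : 0 ≤ q x₀) (hcq : c * q x₀ ≤ 1) : (logb 2 c : EReal) ≤ KL (Pi.single x₀ 1) q := by
  rw [KL]
  split_ifs with hsupp
  · have hqx₀ : 0 < q x₀ := hq.lt_of_ne' (hsupp x₀ (by simp))
    have hsum : ∑ x, klTerm ((Pi.single x₀ 1 : X → ℝ) x) (q x) = logb 2 (1 / q x₀) := by
      rw [Fintype.sum_eq_single x₀ fun x hx => by simp [klTerm, hx]]
      simp only [klTerm, Pi.single_eq_same, one_ne_zero, if_false, one_mul]
    rw [hsum]
    exact_mod_cast logb_le_logb_of_le one_lt_two hc ((le_div_iff₀ hqx₀).2 hcq)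
  · exact le_top

end KL

section FiberModel

variable {X ι : Type*} [Fintype X] [DecidableEq ι] (f : X → ι)

/-- The partition model of the partition of `X` into the fibres of `f`. -/
def fiberModel : Set (X → ℝ) := {q | IsProb q ∧ ∀ x y, f x = f y → q x = q y}

noncomputable def fiberAverage (p : X → ℝ) (x : X) : ℝ :=
  (∑ y with f y = f x, p y) / #{y | f y = f x}

variable {f}

theorem card_fiber_pos (x : X) : 0 < #{y | f y = f x} :=
  card_pos.2 ⟨x, by simp⟩

theorem sum_fiberAverage (p : X → ℝ) : ∑ x, fiberAverage f p x = ∑ x, p x := by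
  have hmaps : ∀ x ∈ (univ : Finset X), f x ∈ univ.image f := fun x _ =>
    mem_image_of_mem f (mem_univ x)
  rw [← sum_fiberwise_of_maps_to hmaps, ← sum_fiberwise_of_maps_to hmaps]
  refine sum_congr rfl fun i _ => ?_
  have hconst : ∀ x ∈ ({x | f x = i} : Finset X),
      fiberAverage f p x = (∑ y with f y = i, p y) / #{y | f y = i} := by
    intro x hx
    rw [fiberAverage, (mem_filter.1 hx).2]
  rw [sum_congr rfl hconst, sum_const, nsmul_eq_mul]
  exact mul_div_cancel_of_imp' fun h => by simp [card_eq_zero.1 (Nat.cast_eq_zero.1 h)]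

theorem le_card_mul_fiberAverage {p : X → ℝ} (hp : ∀ x, 0 ≤ p x) (x : X) :
    p x ≤ #{y | f y = f x} * fiberAverage f p x := by
  rw [fiberAverage, mul_div_cancel₀ _ (Nat.cast_ne_zero.2 (card_fiber_pos x).ne')]
  exact single_le_sum (fun y _ => hp y) (by simp)

theorem fiberAverage_mem_fiberModel {p : X → ℝ} (hp : IsProb p) :
    fiberAverage f p ∈ fiberModel f :=
  ⟨⟨fun x => div_nonneg (sum_nonneg fun y _ => hp.1 y) (Nat.cast_nonneg _),
      (sum_fiberAverage p).trans hp.2⟩,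
    fun x y hxy => by simp only [fiberAverage, hxy]⟩

theorem card_mul_le_one_of_mem_fiberModel {q : X → ℝ} (hq : q ∈ fiberModel f) (x : X) :
    #{y | f y = f x} * q x ≤ 1 := by
  have hblock : ∑ y with f y = f x, q y = #{y | f y = f x} * q x := by
    rw [sum_congr rfl fun y hy => hq.2 y x (mem_filter.1 hy).2, sum_const, nsmul_eq_mul]
  rw [← hblock, ← hq.1.2]
  exact sum_le_univ_sum_of_nonneg hq.1.1

theorem KLset_fiberModel_le {p : X → ℝ} (hp : IsProb p) :
    KLset p (fiberModel f) ≤ ⨆ x, (logb 2 #{y | f y = f x} : EReal) := by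
  have : Nonempty X := by
    by_contra h
    simpa [not_nonempty_iff.1 h] using hp.2
  obtain ⟨x₀, hmax⟩ := Finite.exists_max fun x => #{y | f y = f x}
  have hmem := fiberAverage_mem_fiberModel (f := f) hp
  have hle : ∀ x, p x ≤ #{y | f y = f x₀} * fiberAverage f p x := fun x =>
    (le_card_mul_fiberAverage hp.1 x).trans
      (mul_le_mul_of_nonneg_right (Nat.cast_le.2 (hmax x)) (hmem.1.1 x))
  calc KLset p (fiberModel f) ≤ KL p (fiberAverage f p) := biInf_le _ hmem
    _ ≤ logb 2 #{y | f y = f x₀} :=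
      KL_le_logb_of_le_mul hp (Nat.cast_pos.2 (card_fiber_pos x₀)) hle
    _ ≤ ⨆ x, (logb 2 #{y | f y = f x} : EReal) := le_iSup_of_le x₀ le_rfl

theorem logb_card_fiber_le_KLset_single [DecidableEq X] (x₀ : X) :
    (logb 2 #{y | f y = f x₀} : EReal) ≤ KLset (Pi.single x₀ 1) (fiberModel f) :=
  le_iInf₂ fun _ hq => logb_le_KL_single (Nat.cast_pos.2 (card_fiber_pos x₀)) (hq.1.1 x₀)
    (card_mul_le_one_of_mem_fiberModel hq x₀)

theorem iSup_KLset_fiberModel :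
    (⨆ p ∈ {p : X → ℝ | IsProb p}, KLset p (fiberModel f)) =
      ⨆ x, (logb 2 #{y | f y = f x} : EReal) := by
  classical
  refine le_antisymm (iSup₂_le fun p hp => KLset_fiberModel_le hp) (iSup_le fun x₀ => ?_)
  exact (logb_card_fiber_le_KLset_single x₀).trans (le_iSup₂_of_le _ (isProb_single x₀) le_rfl)

theorem eq_fiber_of_pairwise_disjoint {B : ι → Finset X}
    (hdisj : ∀ i j, i ≠ j → Disjoint (B i) (B j)) (hf : ∀ x, x ∈ B (f x)) (i : ι) :
    B i = ({x | f x = i} : Finset X) := by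
  ext x
  rw [mem_filter, and_iff_right (mem_univ x)]
  refine ⟨fun hx => ?_, fun hx => hx ▸ hf x⟩
  by_contra hne
  exact disjoint_left.1 (hdisj _ _ hne) (hf x) hx

end FiberModel

/-- (Corollary 1 of the paper.) For a partition `ξ = {X₁,…,X_m}` (blocks
`B i`) of a finite set `X`, the maximal KL divergence to the partition model `P_ξ` equals
`max_i log₂ |Xᵢ|`. -/
theorem max_kl_partition_model {X : Type*} [Fintype X] (m : ℕ)
    (B : Fin m → Finset X) (hne : ∀ i, (B i).Nonempty)
    (hdisj : ∀ i j, i ≠ j → Disjoint (B i) (B j))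
    (hcover : ∀ x, ∃ i, x ∈ B i)
    (Pξ : Set (X → ℝ))
    (hPξ : Pξ = {q | IsProb q ∧ ∀ i, ∀ x ∈ B i, ∀ y ∈ B i, q x = q y}) :
    (⨆ p ∈ {p : X → ℝ | IsProb p}, KLset p Pξ) =
      ⨆ i, ((Real.logb 2 ((B i).card) : ℝ) : EReal) := by
  choose idx hidx using hcover
  have hB := eq_fiber_of_pairwise_disjoint hdisj hidx
  have hsurj : Function.Surjective idx := fun i =>
    let ⟨x, hx⟩ := hne i
    ⟨x, by simpa [hB i] using hx⟩
  have hmodel : Pξ = fiberModel idx := by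
    subst hPξ
    ext q
    simp only [hB, mem_filter, mem_univ, true_and, fiberModel, Set.mem_ofPred_eq]
    exact and_congr_right fun _ =>
      ⟨fun h x y hxy => h _ x rfl y hxy.symm, fun h i x hx y hy => h x y (hx.trans hy.symm)⟩
  rw [hmodel, iSup_KLset_fiberModel, ← hsurj.iSup_comp]
  simp only [hB]
end
end
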